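/- arXiv:1511.01748 — 11 statements merged into one kernel-verified Lean document; each statement's English description precedes it below -/
import Mathlib

section
/- Let S be a nonempty finite subset of ℝⁿ, let f : S → ℝᵐ, and let x ∈ ℝⁿ \ S. Then λ(f,S)(x) := inf_{y∈ℝᵐ} max_{a∈S} ‖f(a)−y‖/‖a−x‖ satisfies λ(f,S)(x) ≤ Lip(f,S), where Lip(f,S) := sup_{a≠b∈S} ‖f(a)−f(b)‖/‖a−b‖. -/
/-!
Let `y₀` minimise the continuous, coercive function `y ↦ max_{a ∈ S} ‖f a - y‖ / ‖a - x‖`, with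
minimum `M`. If `y₀` lay outside the convex hull of the values `f a` at the points `a` where the
maximum is attained, moving `y₀` a little towards that hull would decrease every maximal ratio.
So `y₀ = ∑ wᵢ f aᵢ` is a convex combination of such values, and the identity
`∑ᵢⱼ wᵢ wⱼ ‖vᵢ - vⱼ‖² = 2 ∑ᵢ wᵢ ‖vᵢ - c‖² - 2 ‖∑ᵢ wᵢ vᵢ - c‖²` (applied with `c = y₀` and `c = x`)
gives `2 M² Q = ∑ᵢⱼ wᵢ wⱼ ‖f aᵢ - f aⱼ‖² ≤ L² ∑ᵢⱼ wᵢ wⱼ ‖aᵢ - aⱼ‖² ≤ 2 L² Q`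
with `L = Lip(f, S)` and `Q = ∑ᵢ wᵢ ‖aᵢ - x‖² > 0`, whence `M ≤ L`.
-/

open Finset Filter Topology RealInnerProductSpace

section InnerProduct

variable {E : Type*} [NormedAddCommGroup E] [InnerProductSpace ℝ E]

theorem sum_sum_mul_norm_sub_sq {ι : Type*} (t : Finset ι) {w : ι → ℝ} (hw : ∑ i ∈ t, w i = 1)
    (v : ι → E) :
    ∑ i ∈ t, ∑ j ∈ t, w i * w j * ‖v i - v j‖ ^ 2
      = 2 * ∑ i ∈ t, w i * ‖v i‖ ^ 2 - 2 * ‖∑ i ∈ t, w i • v i‖ ^ 2 := by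
  have hcross : ‖∑ i ∈ t, w i • v i‖ ^ 2 = ∑ i ∈ t, ∑ j ∈ t, w i * w j * ⟪v i, v j⟫ := by
    rw [← real_inner_self_eq_norm_sq]
    simp_rw [sum_inner, inner_sum, real_inner_smul_left, real_inner_smul_right, mul_assoc]
  have hrow : ∀ i, ∑ j ∈ t, w i * w j * ‖v i‖ ^ 2 = w i * ‖v i‖ ^ 2 := fun i => by
    rw [← sum_mul, ← mul_sum, hw, mul_one]
  have hcol : ∀ j, ∑ i ∈ t, w i * w j * ‖v j‖ ^ 2 = w j * ‖v j‖ ^ 2 := fun j => by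
    rw [← sum_mul, ← sum_mul, hw, one_mul]
  calc ∑ i ∈ t, ∑ j ∈ t, w i * w j * ‖v i - v j‖ ^ 2
      = ∑ i ∈ t, ∑ j ∈ t, w i * w j * ‖v i‖ ^ 2 + ∑ i ∈ t, ∑ j ∈ t, w i * w j * ‖v j‖ ^ 2
          - 2 * ∑ i ∈ t, ∑ j ∈ t, w i * w j * ⟪v i, v j⟫ := by
        simp_rw [mul_sum, ← sum_add_distrib, ← sum_sub_distrib, norm_sub_sq_real]
        exact sum_congr rfl fun i _ => sum_congr rfl fun j _ => by ring
    _ = _ := by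
        rw [sum_comm (f := fun i j => w i * w j * ‖v j‖ ^ 2)]
        simp_rw [hrow, hcol, hcross]
        ring

theorem eventually_norm_sub_add_smul_lt {y z v : E} (h : 0 < ⟪v, z - y⟫) :
    ∀ᶠ τ in 𝓝[>] (0 : ℝ), ‖z - (y + τ • v)‖ < ‖z - y‖ := by
  have hsmall : ∀ᶠ τ in 𝓝 (0 : ℝ), τ * ‖v‖ ^ 2 < 2 * ⟪v, z - y⟫ := by
    have : Tendsto (fun τ : ℝ => τ * ‖v‖ ^ 2) (𝓝 0) (𝓝 0) := by
      simpa using (continuous_mul_const (‖v‖ ^ 2)).tendsto (0 : ℝ)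
    exact this.eventually (gt_mem_nhds (by linarith))
  filter_upwards [nhdsWithin_le_nhds hsmall, self_mem_nhdsWithin] with τ hτ (hpos : 0 < τ)
  have hsq : ‖z - (y + τ • v)‖ ^ 2 = ‖z - y‖ ^ 2 - τ * (2 * ⟪v, z - y⟫ - τ * ‖v‖ ^ 2) := by
    rw [sub_add_eq_sub_sub, norm_sub_sq_real, real_inner_smul_right, norm_smul,
      Real.norm_of_nonneg hpos.le, real_inner_comm]
    ring
  refine (pow_lt_pow_iff_left₀ (norm_nonneg _) (norm_nonneg _) two_ne_zero).1 ?_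
  rw [hsq]
  nlinarith

theorem exists_inner_pos_of_notMem_convexHull [CompleteSpace E] {s : Set E} (hs : s.Finite)
    {y : E} (hy : y ∉ convexHull ℝ s) : ∃ v : E, ∀ z ∈ s, 0 < ⟪v, z - y⟫ := by
  obtain ⟨φ, u, hφy, hφs⟩ := geometric_hahn_banach_point_closed (convex_convexHull ℝ s)
    (hs.isClosed_convexHull (𝕜 := ℝ)) hy
  refine ⟨(InnerProductSpace.toDual ℝ E).symm φ, fun z hz => ?_⟩
  have hφ : ∀ z, ⟪(InnerProductSpace.toDual ℝ E).symm φ, z⟫ = φ z := fun z =>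
    InnerProductSpace.toDual_symm_apply
  rw [hφ, map_sub, sub_pos]
  exact hφy.trans (hφs z (subset_convexHull ℝ s hz))

variable {F : Type*} [NormedAddCommGroup F] [InnerProductSpace ℝ F]

theorem le_of_sum_smul_eq_of_norm_sub_eq_mul {ι : Type*} [Fintype ι] {w : ι → ℝ}
    (hw₀ : ∀ i, 0 ≤ w i) (hw₁ : ∑ i, w i = 1) {p : ι → E} {q : ι → F} {x : E} {y : F}
    {M L : ℝ} (hy : ∑ i, w i • q i = y) (hx : ∀ i, p i ≠ x)
    (hM : ∀ i, ‖q i - y‖ = M * ‖p i - x‖) (hL : 0 ≤ L)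
    (hq : ∀ i j, ‖q i - q j‖ ≤ L * ‖p i - p j‖) : M ≤ L := by
  set Q := ∑ i, w i * ‖p i - x‖ ^ 2 with hQ_def
  have hQ : 0 < Q := by
    obtain ⟨i, hi⟩ : ∃ i, 0 < w i := by
      by_contra! h
      linarith [sum_nonpos fun i (_ : i ∈ univ) => h i]
    exact sum_pos' (fun i _ => mul_nonneg (hw₀ i) (sq_nonneg _))
      ⟨i, mem_univ i, mul_pos hi (pow_pos (norm_pos_iff.2 (sub_ne_zero.2 (hx i))) 2)⟩
  have hq_var : ∑ i, ∑ j, w i * w j * ‖q i - q j‖ ^ 2 = 2 * (M ^ 2 * Q) := by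
    have h := sum_sum_mul_norm_sub_sq univ hw₁ fun i => q i - y
    simp_rw [sub_sub_sub_cancel_right, smul_sub, sum_sub_distrib, ← sum_smul, hw₁, one_smul, hy,
      sub_self, hM] at h
    rw [h, norm_zero, hQ_def, mul_sum _ _ (M ^ 2)]
    simp_rw [mul_pow, mul_left_comm (w _)]
    ring
  have hp_var : ∑ i, ∑ j, w i * w j * ‖p i - p j‖ ^ 2 ≤ 2 * Q := by
    have h := sum_sum_mul_norm_sub_sq univ hw₁ fun i => p i - x
    simp_rw [sub_sub_sub_cancel_right] at h
    rw [h]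
    exact sub_le_self _ (by positivity)
  have hpair : ∀ i j, w i * w j * ‖q i - q j‖ ^ 2 ≤ L ^ 2 * (w i * w j * ‖p i - p j‖ ^ 2) :=
    fun i j => by
      rw [mul_left_comm, ← mul_pow]
      exact mul_le_mul_of_nonneg_left (pow_le_pow_left₀ (norm_nonneg _) (hq i j) 2)
        (mul_nonneg (hw₀ i) (hw₀ j))
  have hMQ : M ^ 2 * Q ≤ L ^ 2 * Q := by
    have := calc 2 * (M ^ 2 * Q) = ∑ i, ∑ j, w i * w j * ‖q i - q j‖ ^ 2 := hq_var.symm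
      _ ≤ ∑ i, ∑ j, L ^ 2 * (w i * w j * ‖p i - p j‖ ^ 2) :=
        sum_le_sum fun i _ => sum_le_sum fun j _ => hpair i j
      _ = L ^ 2 * ∑ i, ∑ j, w i * w j * ‖p i - p j‖ ^ 2 := by simp_rw [mul_sum]
      _ ≤ L ^ 2 * (2 * Q) := mul_le_mul_of_nonneg_left hp_var (sq_nonneg L)
    linarith
  exact le_of_sq_le_sq (le_of_mul_le_mul_right hMQ hQ) hL

end InnerProduct

section MinimaxCenter

variable {α F : Type*} {S : Finset α} (hS : S.Nonempty) (q : α → F) {r : α → ℝ}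

theorem exists_forall_sup'_norm_sub_div_le [NormedAddCommGroup F] [ProperSpace F]
    (hr : ∀ a ∈ S, 0 < r a) :
    ∃ y₀, ∀ y, S.sup' hS (fun a => ‖q a - y₀‖ / r a) ≤ S.sup' hS (fun a => ‖q a - y‖ / r a) := by
  obtain ⟨a₀, ha₀⟩ := id hS
  refine (Continuous.finset_sup'_apply hS fun a _ => by fun_prop).exists_forall_le ?_
  have hlow : ∀ y, (‖y‖ + -‖q a₀‖) / r a₀ ≤ S.sup' hS (fun a => ‖q a - y‖ / r a) := fun y =>
    (div_le_div_of_nonneg_right (by linarith [norm_sub_norm_le y (q a₀), norm_sub_rev y (q a₀)])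
      (hr a₀ ha₀).le).trans (S.le_sup' (fun a => ‖q a - y‖ / r a) ha₀)
  exact tendsto_atTop_mono hlow <|
    (tendsto_norm_cocompact_atTop.atTop_add tendsto_const_nhds).atTop_div_const (hr a₀ ha₀)

theorem mem_convexHull_of_forall_sup'_norm_sub_div_le [NormedAddCommGroup F]
    [InnerProductSpace ℝ F] [CompleteSpace F] (hr : ∀ a ∈ S, 0 < r a) {y₀ : F}
    (hmin : ∀ y, S.sup' hS (fun a => ‖q a - y₀‖ / r a) ≤ S.sup' hS (fun a => ‖q a - y‖ / r a)) :
    y₀ ∈ convexHull ℝ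
      (q '' {a | a ∈ S ∧ ‖q a - y₀‖ / r a = S.sup' hS (fun a => ‖q a - y₀‖ / r a)}) := by
  set M := S.sup' hS (fun a => ‖q a - y₀‖ / r a)
  by_contra h
  obtain ⟨v, hv⟩ := exists_inner_pos_of_notMem_convexHull
    ((S.finite_toSet.subset fun _ ha => ha.1).image q) h
  have hdesc : ∀ a ∈ S, ∀ᶠ τ in 𝓝[>] (0 : ℝ), ‖q a - (y₀ + τ • v)‖ / r a < M := by
    intro a ha
    by_cases hact : ‖q a - y₀‖ / r a = M
    · filter_upwards [eventually_norm_sub_add_smul_lt (hv _ ⟨a, ⟨ha, hact⟩, rfl⟩)] with τ hτ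
      exact hact ▸ div_lt_div_of_pos_right hτ (hr a ha)
    · have hlt : ‖q a - y₀‖ / r a < M := (S.le_sup' (fun a => ‖q a - y₀‖ / r a) ha).lt_of_ne hact
      have hcont : Continuous fun τ : ℝ => ‖q a - (y₀ + τ • v)‖ / r a := by fun_prop
      refine nhdsWithin_le_nhds (hcont.continuousAt.eventually (gt_mem_nhds ?_))
      simpa using hlt
  obtain ⟨τ, hτ⟩ := ((eventually_all_finset S).2 hdesc).exists
  exact (hmin (y₀ + τ • v)).not_gt ((S.sup'_lt_iff hS).2 hτ)

end MinimaxCenter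

theorem norm_sub_le_sSup_div_mul {E F : Type*} [NormedAddCommGroup E] [SeminormedAddCommGroup F]
    {S : Finset E} (f : E → F) {a b : E} (ha : a ∈ S) (hb : b ∈ S) :
    ‖f a - f b‖ ≤ sSup {r : ℝ | ∃ a ∈ S, ∃ b ∈ S, a ≠ b ∧ r = ‖f a - f b‖ / ‖a - b‖} * ‖a - b‖ := by
  rcases eq_or_ne a b with rfl | hab
  · simp
  have hfin : {r : ℝ | ∃ a ∈ S, ∃ b ∈ S, a ≠ b ∧ r = ‖f a - f b‖ / ‖a - b‖}.Finite :=
    ((S ×ˢ S).finite_toSet.image fun p => ‖f p.1 - f p.2‖ / ‖p.1 - p.2‖).subset <| by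
      rintro _ ⟨a, ha, b, hb, -, rfl⟩
      exact ⟨(a, b), mem_product.2 ⟨ha, hb⟩, rfl⟩
  rw [← div_le_iff₀ (norm_pos_iff.2 (sub_ne_zero.2 hab))]
  exact le_csSup hfin.bddAbove ⟨a, ha, b, hb, hab, rfl⟩

/-- For a nonempty finite `S ⊆ ℝⁿ`, `f : S → ℝᵐ` and `x ∈ ℝⁿ \ S`,
`λ(f,S)(x) := inf_{y ∈ ℝᵐ} max_{a ∈ S} ‖f a - y‖ / ‖a - x‖` is at most
`Lip(f,S) := sup_{a ≠ b ∈ S} ‖f a - f b‖ / ‖a - b‖`. -/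
theorem kirszbraun_lambda_le_lip (n m : ℕ)
    (S : Finset (EuclideanSpace ℝ (Fin n))) (hS : S.Nonempty)
    (f : EuclideanSpace ℝ (Fin n) → EuclideanSpace ℝ (Fin m))
    (x : EuclideanSpace ℝ (Fin n)) (hx : x ∉ S) :
    (⨅ y : EuclideanSpace ℝ (Fin m), S.sup' hS (fun a => ‖f a - y‖ / ‖a - x‖))
      ≤ sSup {r : ℝ | ∃ a ∈ S, ∃ b ∈ S, a ≠ b ∧ r = ‖f a - f b‖ / ‖a - b‖} := by
  have hax : ∀ a ∈ S, 0 < ‖a - x‖ := fun a ha =>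
    norm_pos_iff.2 (sub_ne_zero.2 (ne_of_mem_of_not_mem ha hx))
  obtain ⟨y₀, hmin⟩ := exists_forall_sup'_norm_sub_div_le hS f hax
  obtain ⟨ι, _, w, z, hw₀, hw₁, hz, hy₀⟩ := mem_convexHull_iff_exists_fintype.1
    (mem_convexHull_of_forall_sup'_norm_sub_div_le hS f hax hmin)
  choose p hp hpz using hz
  obtain rfl : (fun i => f (p i)) = z := funext hpz
  have hM : ∀ i, ‖f (p i) - y₀‖ = S.sup' hS (fun a => ‖f a - y₀‖ / ‖a - x‖) * ‖p i - x‖ :=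
    fun i => (div_eq_iff (hax _ (hp i).1).ne').1 (hp i).2
  have hL : 0 ≤ sSup {r : ℝ | ∃ a ∈ S, ∃ b ∈ S, a ≠ b ∧ r = ‖f a - f b‖ / ‖a - b‖} :=
    Real.sSup_nonneg (by rintro _ ⟨a, -, b, -, -, rfl⟩; positivity)
  exact (ciInf_le ⟨_, Set.forall_mem_range.2 hmin⟩ y₀).trans <|
    le_of_sum_smul_eq_of_norm_sub_eq_mul hw₀ hw₁ hy₀ (fun i => ne_of_mem_of_not_mem (hp i).1 hx)
      hM hL fun i j => norm_sub_le_sSup_div_mul f (hp i).1 (hp j).1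
end

section
/- Let S be a nonempty finite subset of ℝⁿ, f : S → ℝᵐ, and x ∈ ℝⁿ \ S. Then there exists a unique point y(x) ∈ ℝᵐ such that max_{a∈S} ‖f(a)−y(x)‖/‖a−x‖ = λ(f,S)(x), i.e., the function y ↦ max_{a∈S} ‖f(a)−y‖/‖a−x‖ attains its infimum over ℝᵐ at exactly one point. -/
/-!
Write `F y = max_{a ∈ S} ‖f a - y‖ / ‖a - x‖`; the weights `‖a - x‖` are positive because
`x ∉ S`. `F` is continuous and tends to infinity at infinity, so it attains its infimum. The
Euclidean norm is strictly convex, so if `y₀ ≠ y₁` then every term of `F` at the midpoint is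
strictly below the larger of its values at `y₀` and `y₁`; two distinct minimizers would
therefore produce a strictly smaller value at their midpoint.
-/

open Filter

theorem existsUnique_eq_iInf_of_midpoint_lt {E : Type*} [AddCommGroup E] [Module ℝ E]
    {F : E → ℝ} (hmin : ∃ y, ∀ z, F y ≤ F z)
    (hmid : ∀ y₀ y₁, y₀ ≠ y₁ → F (midpoint ℝ y₀ y₁) < max (F y₀) (F y₁)) :
    ∃! y, F y = ⨅ z, F z := by
  obtain ⟨y₀, hy₀⟩ := hmin
  have hbdd : BddBelow (Set.range F) := ⟨F y₀, Set.forall_mem_range.2 hy₀⟩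
  have hinf : F y₀ = ⨅ z, F z := le_antisymm (le_ciInf hy₀) (ciInf_le hbdd y₀)
  refine ⟨y₀, hinf, fun y₁ hy₁ => ?_⟩
  by_contra hne
  have hlt := hmid y₀ y₁ (Ne.symm hne)
  rw [hy₁, ← hinf, max_self] at hlt
  exact (hy₀ _).not_gt hlt

section WeightedMaxDistance

variable {ι E : Type*} [NormedAddCommGroup E] {s : Finset ι} (hs : s.Nonempty) (c : ι → E)
  {w : ι → ℝ}

theorem continuous_sup'_norm_sub_div :
    Continuous fun y => s.sup' hs fun i => ‖c i - y‖ / w i :=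
  Continuous.finset_sup'_apply hs fun _ _ => (continuous_const.sub continuous_id).norm.div_const _

theorem tendsto_sup'_norm_sub_div_cocompact [ProperSpace E] {i : ι} (hi : i ∈ s) (hwi : 0 < w i) :
    Tendsto (fun y => s.sup' hs fun i => ‖c i - y‖ / w i) (cocompact E) atTop := by
  have hterm : Tendsto (fun y => ‖c i - y‖ / w i) (cocompact E) atTop := by
    simpa only [← dist_eq_norm, dist_comm (c i)] using
      (tendsto_dist_right_cocompact_atTop (c i)).atTop_div_const hwi
  exact tendsto_atTop_mono (fun y => s.le_sup' (fun i => ‖c i - y‖ / w i) hi) hterm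

theorem sup'_norm_sub_div_midpoint_lt [NormedSpace ℝ E] [StrictConvexSpace ℝ E]
    (hw : ∀ i ∈ s, 0 < w i) {y₀ y₁ : E} (hne : y₀ ≠ y₁) :
    (s.sup' hs fun i => ‖c i - midpoint ℝ y₀ y₁‖ / w i) <
      max (s.sup' hs fun i => ‖c i - y₀‖ / w i) (s.sup' hs fun i => ‖c i - y₁‖ / w i) := by
  set M := max (s.sup' hs fun i => ‖c i - y₀‖ / w i) (s.sup' hs fun i => ‖c i - y₁‖ / w i)
  refine (Finset.sup'_lt_iff hs).2 fun i hi => (div_lt_iff₀ (hw i hi)).2 ?_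
  have hle : ∀ y, (s.sup' hs fun i => ‖c i - y‖ / w i) ≤ M → ‖c i - y‖ ≤ M * w i :=
    fun y hy => (div_le_iff₀ (hw i hi)).1 ((s.le_sup' (fun i => ‖c i - y‖ / w i) hi).trans hy)
  have hsplit : c i - midpoint ℝ y₀ y₁ = (2⁻¹ : ℝ) • (c i - y₀) + (2⁻¹ : ℝ) • (c i - y₁) := by
    rw [midpoint_eq_smul_add, invOf_eq_inv]
    module
  rw [hsplit]
  exact norm_combo_lt_of_ne (hle y₀ (le_max_left _ _)) (hle y₁ (le_max_right _ _))
    (fun h => hne (sub_right_injective h)) (by norm_num) (by norm_num) (by norm_num)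

end WeightedMaxDistance

/-- For a nonempty finite `S ⊆ ℝⁿ`, `f : S → ℝᵐ` and `x ∈ ℝⁿ \ S`,
the function `y ↦ max_{a ∈ S} ‖f a - y‖ / ‖a - x‖` attains its infimum over `ℝᵐ`
at exactly one point `y(x)`. -/
theorem kirszbraun_unique_minimizer (n m : ℕ)
    (S : Finset (EuclideanSpace ℝ (Fin n))) (hS : S.Nonempty)
    (f : EuclideanSpace ℝ (Fin n) → EuclideanSpace ℝ (Fin m))
    (x : EuclideanSpace ℝ (Fin n)) (hx : x ∉ S) :
    ∃! y : EuclideanSpace ℝ (Fin m),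
      (S.sup' hS (fun a => ‖f a - y‖ / ‖a - x‖))
        = ⨅ z : EuclideanSpace ℝ (Fin m), S.sup' hS (fun a => ‖f a - z‖ / ‖a - x‖) := by
  have hw : ∀ a ∈ S, 0 < ‖a - x‖ := fun a ha =>
    norm_pos_iff.2 (sub_ne_zero.2 (ne_of_mem_of_not_mem ha hx))
  have ⟨a, ha⟩ := hS
  refine existsUnique_eq_iInf_of_midpoint_lt ?_ fun _ _ => sup'_norm_sub_div_midpoint_lt hS f hw
  exact (continuous_sup'_norm_sub_div hS f).exists_forall_le
    (tendsto_sup'_norm_sub_div_cocompact hS f ha (hw a ha))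
end

section
/- Let S be a nonempty finite subset of ℝⁿ, f : S → ℝᵐ, x ∈ ℝⁿ \ S, and let K(f,S)(x) denote the unique minimizer of y ↦ max_{a∈S} ‖f(a)−y‖/‖a−x‖. Then the set B = { f(z) : z ∈ S and ‖f(z)−K(f,S)(x)‖/‖z−x‖ = λ(f,S)(x) } is nonempty, and K(f,S)(x) belongs to the convex hull of B. -/
/-!
If `K` were outside the convex hull of the active points `B`, Hahn–Banach would give a direction
`v` with `⟪p - K, v⟫ > 0` for every `p ∈ B`. Moving `K` slightly along `v` strictly decreases the
distance to every active point, while the inactive ratios stay below the maximum by continuity;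
so the maximum drops, contradicting the minimality of `K`.
-/

open Filter Topology
open scoped RealInnerProductSpace

section

variable {E : Type*} [NormedAddCommGroup E] [InnerProductSpace ℝ E]

theorem exists_inner_sub_pos_of_notMem_convexHull [CompleteSpace E] {B : Set E} (hB : B.Finite)
    {K : E} (hK : K ∉ convexHull ℝ B) : ∃ v : E, ∀ p ∈ B, 0 < ⟪p - K, v⟫ := by
  obtain ⟨φ, u, hφK, hφB⟩ :=
    geometric_hahn_banach_point_closed (convex_convexHull ℝ B) (hB.isClosed_convexHull ℝ) hK
  refine ⟨(InnerProductSpace.toDual ℝ E).symm φ, fun p hp => ?_⟩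
  rw [real_inner_comm, InnerProductSpace.toDual_symm_apply, map_sub]
  linarith [hφB p (subset_convexHull ℝ B hp)]

theorem eventually_norm_sub_smul_lt {u v : E} (h : 0 < ⟪u, v⟫) :
    ∀ᶠ t in 𝓝[>] (0 : ℝ), ‖u - t • v‖ < ‖u‖ := by
  have hexpand : ∀ t : ℝ, ‖u - t • v‖ ^ 2 = ‖u‖ ^ 2 - t * (2 * ⟪u, v⟫ - t * ‖v‖ ^ 2) := by
    intro t
    rw [norm_sub_sq_real, real_inner_smul_right, norm_smul, Real.norm_eq_abs, mul_pow, sq_abs]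
    ring
  have hslope : ∀ᶠ t in 𝓝 (0 : ℝ), 0 < 2 * ⟪u, v⟫ - t * ‖v‖ ^ 2 := by
    have hcont : Continuous fun t : ℝ => 2 * ⟪u, v⟫ - t * ‖v‖ ^ 2 := by fun_prop
    have := hcont.tendsto 0
    rw [zero_mul, sub_zero] at this
    exact this.eventually_const_lt (by linarith)
  filter_upwards [nhdsWithin_le_nhds hslope, self_mem_nhdsWithin] with t hpos (ht : 0 < t)
  refine lt_of_pow_lt_pow_left₀ 2 (norm_nonneg _) ?_
  rw [hexpand]
  nlinarith [mul_pos ht hpos]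

theorem mem_convexHull_of_forall_sup'_le [CompleteSpace E] {ι : Type*} {S : Finset ι}
    (hS : S.Nonempty) (p : ι → E) {w : ι → ℝ} (hw : ∀ a ∈ S, 0 < w a) {K : E}
    (hK : ∀ y, S.sup' hS (fun a => ‖p a - K‖ / w a) ≤ S.sup' hS (fun a => ‖p a - y‖ / w a)) :
    K ∈ convexHull ℝ {q | ∃ a ∈ S,
      ‖p a - K‖ / w a = S.sup' hS (fun a => ‖p a - K‖ / w a) ∧ q = p a} := by
  set L := S.sup' hS (fun a => ‖p a - K‖ / w a)
  by_contra hKB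
  have hBfin : {q | ∃ a ∈ S, ‖p a - K‖ / w a = L ∧ q = p a}.Finite :=
    (S.finite_toSet.image p).subset fun _ ⟨a, ha, _, hq⟩ => ⟨a, ha, hq.symm⟩
  obtain ⟨v, hv⟩ := exists_inner_sub_pos_of_notMem_convexHull hBfin hKB
  have hdecrease : ∀ a ∈ S, ∀ᶠ t in 𝓝[>] (0 : ℝ), ‖p a - (K + t • v)‖ / w a < L := by
    intro a ha
    rcases (S.le_sup' (fun a => ‖p a - K‖ / w a) ha).eq_or_lt with hactive | hinactive
    · filter_upwards [eventually_norm_sub_smul_lt (hv (p a) ⟨a, ha, hactive, rfl⟩)] with t ht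
      calc ‖p a - (K + t • v)‖ / w a = ‖p a - K - t • v‖ / w a := by rw [sub_add_eq_sub_sub]
        _ < ‖p a - K‖ / w a := div_lt_div_of_pos_right ht (hw a ha)
        _ = L := hactive
    · have hcont : Continuous fun t : ℝ => ‖p a - (K + t • v)‖ / w a := by fun_prop
      have := (hcont.tendsto 0).mono_left (nhdsWithin_le_nhds (s := Set.Ioi 0))
      simp only [zero_smul, add_zero] at this
      exact this.eventually_lt_const hinactive
  obtain ⟨t, ht⟩ := ((eventually_all_finset S).2 hdecrease).exists
  exact (hK (K + t • v)).not_gt ((S.sup'_lt_iff hS).2 ht)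

end

/-- For a nonempty finite `S ⊆ ℝⁿ`, `f : S → ℝᵐ`, `x ∈ ℝⁿ \ S`, and `K`
the (unique) minimizer of `y ↦ max_{a ∈ S} ‖f a - y‖ / ‖a - x‖`, the set
`B = {f z : z ∈ S, ‖f z - K‖/‖z - x‖ = λ(f,S)(x)}` is nonempty and `K` belongs to the
convex hull of `B`. -/
theorem kirszbraun_value_in_convexHull (n m : ℕ)
    (S : Finset (EuclideanSpace ℝ (Fin n))) (hS : S.Nonempty)
    (f : EuclideanSpace ℝ (Fin n) → EuclideanSpace ℝ (Fin m))
    (x : EuclideanSpace ℝ (Fin n)) (hx : x ∉ S)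
    (K : EuclideanSpace ℝ (Fin m))
    (hK : ∀ z : EuclideanSpace ℝ (Fin m),
      (S.sup' hS (fun a => ‖f a - K‖ / ‖a - x‖))
        ≤ S.sup' hS (fun a => ‖f a - z‖ / ‖a - x‖)) :
    ({p : EuclideanSpace ℝ (Fin m) | ∃ z ∈ S,
        ‖f z - K‖ / ‖z - x‖
          = (⨅ y : EuclideanSpace ℝ (Fin m), S.sup' hS (fun a => ‖f a - y‖ / ‖a - x‖))
        ∧ p = f z}).Nonempty ∧
    K ∈ convexHull ℝ {p : EuclideanSpace ℝ (Fin m) | ∃ z ∈ S,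
        ‖f z - K‖ / ‖z - x‖
          = (⨅ y : EuclideanSpace ℝ (Fin m), S.sup' hS (fun a => ‖f a - y‖ / ‖a - x‖))
        ∧ p = f z} := by
  have hinf : (⨅ y : EuclideanSpace ℝ (Fin m), S.sup' hS (fun a => ‖f a - y‖ / ‖a - x‖))
      = S.sup' hS (fun a => ‖f a - K‖ / ‖a - x‖) :=
    IsGLB.ciInf_eq (IsLeast.isGLB ⟨⟨K, rfl⟩, Set.forall_mem_range.2 hK⟩)
  rw [hinf]
  refine ⟨?_, mem_convexHull_of_forall_sup'_le hS f (fun a ha => ?_) hK⟩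
  · obtain ⟨a, ha, hmax⟩ := S.exists_mem_eq_sup' hS (fun a => ‖f a - K‖ / ‖a - x‖)
    exact ⟨f a, a, ha, hmax.symm, rfl⟩
  · exact norm_pos_iff.2 (sub_ne_zero.2 (ne_of_mem_of_not_mem ha hx))
end

section
/- Let S be a nonempty finite subset of ℝⁿ, u : S → ℝ a real-valued function, and x ∈ ℝⁿ \ S, and suppose u₀ ∈ ℝ satisfies u₀ = K(u,S)(x), i.e., u₀ uniquely minimizes y ↦ max_{a∈S} |u(a)−y|/‖a−x‖. Then max_{a∈S} (u(a)−u₀)/‖a−x‖ = max_{a∈S} (u₀−u(a))/‖a−x‖ = λ(u,S)(x); in particular the maximal upward slope from (x,u₀) to the data equals the maximal downward slope. -/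
/-!
Write `Φ(y) = max_a |u a - y| / d a` as the maximum of the upward slope
`up(y) = max_a (u a - y) / d a` and the downward slope `down(y) = max_a (y - u a) / d a`.
The upward slope is continuous and the downward slope strictly increasing, so if
`up(y₀) < Φ(y₀)` then moving `y₀` slightly to the left keeps `up` below `Φ(y₀)` and strictly
lowers `down`, hence `Φ`; so at a minimiser `up(y₀) = Φ(y₀)`. Replacing `u, y` by `-u, -y`
exchanges the two slopes and leaves `Φ` unchanged.
-/

namespace Finset

variable {α : Type*} {S : Finset α} (hS : S.Nonempty) (u d : α → ℝ)

lemma continuous_sup'_sub_div : Continuous fun y => S.sup' hS fun a => (u a - y) / d a :=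
  Continuous.finset_sup'_apply hS fun _ _ => (continuous_const.sub continuous_id).div_const _

lemma strictMono_sup'_sub_div (hd : ∀ a ∈ S, 0 < d a) :
    StrictMono fun y => S.sup' hS fun a => (y - u a) / d a := by
  intro y y' hy
  refine (sup'_lt_iff hS).2 fun a ha => ?_
  calc (y - u a) / d a < (y' - u a) / d a := by gcongr; exact hd a ha
    _ ≤ _ := le_sup' (fun a => (y' - u a) / d a) ha

lemma sup'_sub_div_le_sup'_abs_sub_div (hd : ∀ a ∈ S, 0 ≤ d a) (y : ℝ) :
    S.sup' hS (fun a => (u a - y) / d a) ≤ S.sup' hS (fun a => |u a - y| / d a) :=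
  sup'_mono_fun fun a ha => div_le_div_of_nonneg_right (le_abs_self _) (hd a ha)

lemma sup'_sub_div_eq_of_forall_le (hd : ∀ a ∈ S, 0 < d a) {y₀ : ℝ}
    (hmin : ∀ z, S.sup' hS (fun a => |u a - y₀| / d a) ≤ S.sup' hS (fun a => |u a - z| / d a)) :
    S.sup' hS (fun a => (u a - y₀) / d a) = S.sup' hS (fun a => |u a - y₀| / d a) := by
  set Φ := fun y => S.sup' hS fun a => |u a - y| / d a
  set up := fun y => S.sup' hS fun a => (u a - y) / d a
  set down := fun y => S.sup' hS fun a => (y - u a) / d a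
  refine (sup'_sub_div_le_sup'_abs_sub_div hS u d (fun a ha => (hd a ha).le) y₀).antisymm ?_
  by_contra! hlt
  have hnear : ∀ᶠ y in nhdsWithin y₀ (Set.Iio y₀), up y < Φ y₀ ∧ y < y₀ :=
    (((continuous_sup'_sub_div hS u d).tendsto y₀).eventually (gt_mem_nhds hlt)).filter_mono
      nhdsWithin_le_nhds |>.and self_mem_nhdsWithin
  obtain ⟨y, hup, hy⟩ := hnear.exists
  have hdown : down y < Φ y₀ :=
    (strictMono_sup'_sub_div hS u d hd hy).trans_le <|
      sup'_mono_fun fun a ha =>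
        div_le_div_of_nonneg_right ((le_abs_self _).trans (abs_sub_comm _ _).le) (hd a ha).le
  refine (hmin y).not_gt <| (sup'_lt_iff hS).2 fun a ha => ?_
  rw [abs_eq_max_neg, ← max_div_div_right (hd a ha).le, neg_sub, max_lt_iff]
  exact ⟨(le_sup' (fun a => (u a - y) / d a) ha).trans_lt hup,
    (le_sup' (fun a => (y - u a) / d a) ha).trans_lt hdown⟩

lemma sup'_sub_div_eq_of_forall_le' (hd : ∀ a ∈ S, 0 < d a) {y₀ : ℝ}
    (hmin : ∀ z, S.sup' hS (fun a => |u a - y₀| / d a) ≤ S.sup' hS (fun a => |u a - z| / d a)) :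
    S.sup' hS (fun a => (y₀ - u a) / d a) = S.sup' hS (fun a => |u a - y₀| / d a) := by
  have hneg (y : ℝ) :
      S.sup' hS (fun a => |(-u) a - y| / d a) = S.sup' hS (fun a => |u a - -y| / d a) :=
    sup'_congr hS rfl fun a _ => by rw [Pi.neg_apply, ← abs_neg, neg_sub', neg_neg, sub_neg_eq_add]
  have := sup'_sub_div_eq_of_forall_le hS (-u) d hd (y₀ := -y₀) fun z => by
    rw [hneg, hneg, neg_neg]; exact hmin _
  rw [hneg, neg_neg] at this
  simpa only [Pi.neg_apply, neg_sub_neg] using this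

end Finset

/-- For a nonempty finite `S ⊆ ℝⁿ`, `u : S → ℝ`, `x ∈ ℝⁿ \ S`, and
`u₀ = K(u,S)(x)` the (unique) minimizer of `y ↦ max_{a ∈ S} |u a - y| / ‖a - x‖`, one has
`max_{a∈S} (u a - u₀)/‖a - x‖ = λ(u,S)(x)` and `max_{a∈S} (u₀ - u a)/‖a - x‖ = λ(u,S)(x)`. -/
theorem kirszbraun_real_up_down_slopes (n : ℕ)
    (S : Finset (EuclideanSpace ℝ (Fin n))) (hS : S.Nonempty)
    (u : EuclideanSpace ℝ (Fin n) → ℝ)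
    (x : EuclideanSpace ℝ (Fin n)) (hx : x ∉ S)
    (u₀ : ℝ)
    (hu₀ : ∀ z : ℝ,
      (S.sup' hS (fun a => |u a - u₀| / ‖a - x‖))
        ≤ S.sup' hS (fun a => |u a - z| / ‖a - x‖)) :
    (S.sup' hS (fun a => (u a - u₀) / ‖a - x‖))
        = (⨅ y : ℝ, S.sup' hS (fun a => |u a - y| / ‖a - x‖)) ∧
    (S.sup' hS (fun a => (u₀ - u a) / ‖a - x‖))
        = (⨅ y : ℝ, S.sup' hS (fun a => |u a - y| / ‖a - x‖)) := by
  have hd : ∀ a ∈ S, 0 < ‖a - x‖ := fun a ha =>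
    norm_pos_iff.2 <| sub_ne_zero.2 fun h => hx (h ▸ ha)
  have hinf : (⨅ y : ℝ, S.sup' hS (fun a => |u a - y| / ‖a - x‖))
      = S.sup' hS (fun a => |u a - u₀| / ‖a - x‖) :=
    IsGLB.ciInf_eq (IsLeast.isGLB ⟨⟨u₀, rfl⟩, by rintro _ ⟨z, rfl⟩; exact hu₀ z⟩)
  rw [hinf]
  exact ⟨S.sup'_sub_div_eq_of_forall_le hS u _ hd hu₀,
    S.sup'_sub_div_eq_of_forall_le' hS u _ hd hu₀⟩
end

section
/- Let G = (V,E,Ω) be a finite connected graph with V ⊂ ℝⁿ (adjacent vertices distinct as points), Ω ⊆ V nonempty, f : Ω → ℝᵐ, and let u be an extension of f. Fix x ∈ V \ Ω with S(x) nonempty, and define v by v(y) = u(y) for y ≠ x and v(x) = K(u,S(x))(x). If K(u,S(x))(x) ≠ u(x), then v is tighter than u. -/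
/-!
The objective `y ↦ max_{a ∈ S(x)} ‖u a - y‖ / ‖a - x‖` is strictly convex because the Euclidean
norm is: if two distinct points `y₁ ≠ y₂` both have value at most `M`, then every term at their
midpoint is `< M`, and so is the (finite) maximum.
Hence the minimizer `K` is unique, and `Lv(x) < Lu(x)` whenever `K ≠ u x`. Changing `u` only at
`x` can raise `Lv(p)` at another vertex `p` only through the edge `px`, i.e. to at most `Lv(x)`;
so every local constant that increases ends up `≤ Lv(x) < Lu(x)`, which is tightness.
-/

/-- Local Lipschitz constant of `v` at `x` with respect to the graph with vertex set `V`
and adjacency relation `Adj` (with `sSup ∅ = 0` by the convention of `Real.sSup`). -/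
noncomputable def locLip {n m : ℕ} (V : Finset (EuclideanSpace ℝ (Fin n)))
    (Adj : EuclideanSpace ℝ (Fin n) → EuclideanSpace ℝ (Fin n) → Prop)
    (v : EuclideanSpace ℝ (Fin n) → EuclideanSpace ℝ (Fin m))
    (x : EuclideanSpace ℝ (Fin n)) : ℝ :=
  sSup {r : ℝ | ∃ y ∈ V, Adj x y ∧ r = ‖v y - v x‖ / ‖y - x‖}

/-- `v` is tighter than `u` (max over the empty set is `0`). -/
noncomputable def Tighter {n m : ℕ} (V Ω : Finset (EuclideanSpace ℝ (Fin n)))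
    (Adj : EuclideanSpace ℝ (Fin n) → EuclideanSpace ℝ (Fin n) → Prop)
    (v u : EuclideanSpace ℝ (Fin n) → EuclideanSpace ℝ (Fin m)) : Prop :=
  sSup {r : ℝ | ∃ x ∈ V, x ∉ Ω ∧ locLip V Adj v x < locLip V Adj u x ∧ r = locLip V Adj u x} >
  sSup {r : ℝ | ∃ x ∈ V, x ∉ Ω ∧ locLip V Adj u x < locLip V Adj v x ∧ r = locLip V Adj v x}

theorem Finset.finite_setOf_exists_mem {α : Type*} (s : Finset α) {Q : α → ℝ → Prop}
    (g : α → ℝ) (hQ : ∀ a r, Q a r → r = g a) : {r : ℝ | ∃ a ∈ s, Q a r}.Finite :=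
  (s.finite_toSet.image g).subset fun _ ⟨a, ha, hQa⟩ => ⟨a, ha, (hQ a _ hQa).symm⟩

section MaxWeightedDist

variable {ι E : Type*} [NormedAddCommGroup E]

/-- `max_{a ∈ s, P a} ‖p a - y‖ / d a`; for `s = V`, `P = Adj x`, `d a = ‖a - x‖` this is the
objective minimized by the Kirszbraun value `K(u, S(x))(x)`. -/
noncomputable def maxWeightedDist (s : Finset ι) (P : ι → Prop) (p : ι → E) (d : ι → ℝ)
    (y : E) : ℝ :=
  sSup {r : ℝ | ∃ a ∈ s, P a ∧ r = ‖p a - y‖ / d a}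

variable {s : Finset ι} {P : ι → Prop} {p q : ι → E} {d : ι → ℝ} {y : E} {M : ℝ}

theorem finite_setOf_weightedDist (s : Finset ι) (P : ι → Prop) (p : ι → E) (d : ι → ℝ)
    (y : E) : {r : ℝ | ∃ a ∈ s, P a ∧ r = ‖p a - y‖ / d a}.Finite :=
  s.finite_setOf_exists_mem _ fun _ _ h => h.2

theorem maxWeightedDist_congr (h : ∀ a ∈ s, P a → p a = q a) :
    maxWeightedDist s P p d y = maxWeightedDist s P q d y := by
  unfold maxWeightedDist
  congr 1
  ext r
  refine exists_congr fun a => and_congr_right fun ha => and_congr_right fun hPa => ?_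
  rw [h a ha hPa]

theorem weightedDist_le_maxWeightedDist {a : ι} (ha : a ∈ s) (hPa : P a) :
    ‖p a - y‖ / d a ≤ maxWeightedDist s P p d y :=
  le_csSup (finite_setOf_weightedDist s P p d y).bddAbove ⟨a, ha, hPa, rfl⟩

theorem maxWeightedDist_le_iff (hne : ∃ a ∈ s, P a) :
    maxWeightedDist s P p d y ≤ M ↔ ∀ a ∈ s, P a → ‖p a - y‖ / d a ≤ M := by
  obtain ⟨a, ha, hPa⟩ := hne
  rw [maxWeightedDist, csSup_le_iff (finite_setOf_weightedDist s P p d y).bddAbove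
    ⟨_, a, ha, hPa, rfl⟩]
  exact ⟨fun h b hb hPb => h _ ⟨b, hb, hPb, rfl⟩, fun h _ ⟨b, hb, hPb, hr⟩ => hr ▸ h b hb hPb⟩

theorem maxWeightedDist_lt_iff (hne : ∃ a ∈ s, P a) :
    maxWeightedDist s P p d y < M ↔ ∀ a ∈ s, P a → ‖p a - y‖ / d a < M := by
  obtain ⟨a, ha, hPa⟩ := hne
  rw [maxWeightedDist, (finite_setOf_weightedDist s P p d y).csSup_lt_iff ⟨_, a, ha, hPa, rfl⟩]
  exact ⟨fun h b hb hPb => h _ ⟨b, hb, hPb, rfl⟩, fun h _ ⟨b, hb, hPb, hr⟩ => hr ▸ h b hb hPb⟩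

variable [NormedSpace ℝ E] [StrictConvexSpace ℝ E]

theorem maxWeightedDist_midpoint_lt (hne : ∃ a ∈ s, P a) (hd : ∀ a ∈ s, P a → 0 < d a)
    {y₁ y₂ : E} (hy : y₁ ≠ y₂) (h₁ : maxWeightedDist s P p d y₁ ≤ M)
    (h₂ : maxWeightedDist s P p d y₂ ≤ M) :
    maxWeightedDist s P p d (midpoint ℝ y₁ y₂) < M := by
  rw [maxWeightedDist_le_iff hne] at h₁ h₂
  rw [maxWeightedDist_lt_iff hne]
  intro a ha hPa
  have hda := hd a ha hPa
  rw [div_lt_iff₀ hda]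
  have hmid : p a - midpoint ℝ y₁ y₂ = (1 / 2 : ℝ) • (p a - y₁) + (1 / 2 : ℝ) • (p a - y₂) := by
    rw [midpoint_eq_smul_add, invOf_eq_inv]
    module
  rw [hmid]
  exact norm_combo_lt_of_ne ((div_le_iff₀ hda).mp (h₁ a ha hPa))
    ((div_le_iff₀ hda).mp (h₂ a ha hPa)) (by simpa using hy)
    one_half_pos one_half_pos (add_halves 1)

theorem maxWeightedDist_lt_of_isMin (hne : ∃ a ∈ s, P a) (hd : ∀ a ∈ s, P a → 0 < d a)
    {K w : E} (hK : ∀ z, maxWeightedDist s P p d K ≤ maxWeightedDist s P p d z) (hKw : K ≠ w) :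
    maxWeightedDist s P p d K < maxWeightedDist s P p d w :=
  (hK _).trans_lt (maxWeightedDist_midpoint_lt hne hd hKw (hK w) le_rfl)

end MaxWeightedDist

section LocLip

variable {n m : ℕ} {V Ω : Finset (EuclideanSpace ℝ (Fin n))}
  {Adj : EuclideanSpace ℝ (Fin n) → EuclideanSpace ℝ (Fin n) → Prop}
  {u v : EuclideanSpace ℝ (Fin n) → EuclideanSpace ℝ (Fin m)} {x p : EuclideanSpace ℝ (Fin n)}

theorem le_locLip {a : EuclideanSpace ℝ (Fin n)} (ha : a ∈ V) (hxa : Adj x a) :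
    ‖v a - v x‖ / ‖a - x‖ ≤ locLip V Adj v x :=
  weightedDist_le_maxWeightedDist (p := v) (d := (‖· - x‖)) ha hxa

theorem locLip_nonneg : 0 ≤ locLip V Adj v x :=
  Real.sSup_nonneg fun _ ⟨_, _, _, hr⟩ => hr ▸ div_nonneg (norm_nonneg _) (norm_nonneg _)

theorem locLip_le_max_of_eq_of_ne (hsymm : ∀ x y, Adj x y → Adj y x)
    (hv : ∀ y, y ≠ x → v y = u y) (hpV : p ∈ V) (hp : p ≠ x) :
    locLip V Adj v p ≤ max (locLip V Adj u p) (locLip V Adj v x) := by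
  refine Real.sSup_le ?_ (locLip_nonneg.trans (le_max_right _ _))
  rintro _ ⟨a, ha, hpa, rfl⟩
  by_cases hax : a = x
  · subst hax
    rw [norm_sub_rev, norm_sub_rev a]
    exact (le_locLip hpV (hsymm p a hpa)).trans (le_max_right _ _)
  · rw [hv a hax, hv p hp]
    exact (le_locLip ha hpa).trans (le_max_left _ _)

theorem tighter_of_locLip_lt (hxV : x ∈ V) (hxΩ : x ∉ Ω)
    (hlt : locLip V Adj v x < locLip V Adj u x)
    (hle : ∀ p ∈ V, p ≠ x → locLip V Adj v p ≤ max (locLip V Adj u p) (locLip V Adj v x)) :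
    Tighter V Ω Adj v u := by
  have hincr : sSup {r : ℝ | ∃ p ∈ V, p ∉ Ω ∧ locLip V Adj u p < locLip V Adj v p ∧
      r = locLip V Adj v p} ≤ locLip V Adj v x := by
    refine Real.sSup_le ?_ locLip_nonneg
    rintro _ ⟨p, hpV, -, hup, rfl⟩
    have hpx : p ≠ x := by rintro rfl; exact hup.not_gt hlt
    exact (le_max_iff.mp (hle p hpV hpx)).resolve_left hup.not_ge
  have hdecr : locLip V Adj u x ≤ sSup {r : ℝ | ∃ p ∈ V, p ∉ Ω ∧
      locLip V Adj v p < locLip V Adj u p ∧ r = locLip V Adj u p} :=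
    le_csSup (V.finite_setOf_exists_mem _ fun _ _ h => h.2.2).bddAbove ⟨x, hxV, hxΩ, hlt, rfl⟩
  exact hincr.trans_lt (hlt.trans_le hdecr)

end LocLip

theorem update_by_kirszbraun_value_is_tighter_general (n m : ℕ)
    (V : Finset (EuclideanSpace ℝ (Fin n)))
    (Adj : EuclideanSpace ℝ (Fin n) → EuclideanSpace ℝ (Fin n) → Prop)
    (hsymm : ∀ x y, Adj x y → Adj y x)
    (hne : ∀ x y, Adj x y → x ≠ y)
    (Ω : Finset (EuclideanSpace ℝ (Fin n)))
    (u : EuclideanSpace ℝ (Fin n) → EuclideanSpace ℝ (Fin m))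
    (x : EuclideanSpace ℝ (Fin n)) (hxV : x ∈ V) (hxΩ : x ∉ Ω)
    (hSx : ∃ y ∈ V, Adj x y)
    (K : EuclideanSpace ℝ (Fin m))
    -- K is the Kirszbraun value of u restricted to S(x) at x, i.e. the minimizer of
    -- y ↦ max_{a ∈ S(x)} ‖u a - y‖ / ‖a - x‖
    (hK : ∀ z : EuclideanSpace ℝ (Fin m),
      sSup {r : ℝ | ∃ a ∈ V, Adj x a ∧ r = ‖u a - K‖ / ‖a - x‖}
        ≤ sSup {r : ℝ | ∃ a ∈ V, Adj x a ∧ r = ‖u a - z‖ / ‖a - x‖})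
    (hKne : K ≠ u x)
    (v : EuclideanSpace ℝ (Fin n) → EuclideanSpace ℝ (Fin m))
    (hvx : v x = K) (hv : ∀ y, y ≠ x → v y = u y) :
    Tighter V Ω Adj v u := by
  have hdist : ∀ a ∈ V, Adj x a → 0 < ‖a - x‖ := fun a _ hxa =>
    norm_pos_iff.mpr (sub_ne_zero.mpr (hne x a hxa).symm)
  have hLvx : locLip V Adj v x = maxWeightedDist V (Adj x) u (‖· - x‖) K := by
    rw [← hvx]
    exact maxWeightedDist_congr fun a _ hxa => hv a (hne x a hxa).symm
  have hlt : locLip V Adj v x < locLip V Adj u x :=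
    hLvx ▸ maxWeightedDist_lt_of_isMin hSx hdist hK hKne
  exact tighter_of_locLip_lt hxV hxΩ hlt fun p hpV hp => locLip_le_max_of_eq_of_ne hsymm hv hpV hp

/-- replacing the value of an extension `u` at a single vertex `x ∈ V \ Ω`
by the Kirszbraun value `K(u, S(x))(x)` (when this differs from `u x`) yields a function
`v` which is tighter than `u`. -/
theorem update_by_kirszbraun_value_is_tighter (n m : ℕ)
    (V : Finset (EuclideanSpace ℝ (Fin n)))
    (Adj : EuclideanSpace ℝ (Fin n) → EuclideanSpace ℝ (Fin n) → Prop)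
    (hsymm : ∀ x y, Adj x y → Adj y x)
    (hne : ∀ x y, Adj x y → x ≠ y)
    (hconn : ∀ x ∈ V, ∀ y ∈ V,
      Relation.ReflTransGen (fun a b => a ∈ V ∧ b ∈ V ∧ Adj a b) x y)
    (Ω : Finset (EuclideanSpace ℝ (Fin n))) (hΩ : Ω.Nonempty) (hΩV : Ω ⊆ V)
    (f u : EuclideanSpace ℝ (Fin n) → EuclideanSpace ℝ (Fin m))
    (hu : ∀ z ∈ Ω, u z = f z)
    (x : EuclideanSpace ℝ (Fin n)) (hxV : x ∈ V) (hxΩ : x ∉ Ω)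
    (hSx : ∃ y ∈ V, Adj x y)
    (K : EuclideanSpace ℝ (Fin m))
    -- K is the Kirszbraun value of u restricted to S(x) at x, i.e. the minimizer of
    -- y ↦ max_{a ∈ S(x)} ‖u a - y‖ / ‖a - x‖
    (hK : ∀ z : EuclideanSpace ℝ (Fin m),
      sSup {r : ℝ | ∃ a ∈ V, Adj x a ∧ r = ‖u a - K‖ / ‖a - x‖}
        ≤ sSup {r : ℝ | ∃ a ∈ V, Adj x a ∧ r = ‖u a - z‖ / ‖a - x‖})
    (hKne : K ≠ u x)
    (v : EuclideanSpace ℝ (Fin n) → EuclideanSpace ℝ (Fin m))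
    (hvx : v x = K) (hv : ∀ y, y ≠ x → v y = u y) :
    Tighter V Ω Adj v u :=
  update_by_kirszbraun_value_is_tighter_general n m V Adj hsymm hne Ω u x hxV hxΩ hSx K hK hKne v
    hvx hv
end

section
/- Let G = (V,E,Ω) be a finite connected graph with V ⊂ ℝⁿ (adjacent vertices distinct as points, each vertex of V \ Ω having nonempty neighborhood), Ω ⊆ V nonempty, and f : Ω → ℝᵐ. Then there exists a Kirszbraun extension u of f on G, i.e., a function u : V → ℝᵐ with u = f on Ω and u(x) = K(u,S(x))(x) for every x ∈ V \ Ω. -/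
/-!
Minimize `Φₜ(u) = ∑_{edges ab} exp (t · ‖u a - u b‖ / ‖a - b‖)` over the compact set of
configurations that equal `f` on the fixed vertices and take values in a large ball elsewhere,
and let `u` be a cluster point of minimizers as `t = k → ∞`. Suppose moving `u x` to some `z`
lowered the largest slope `M` at `x` to `M - 3δ`. Near `u`, the same move makes every edge at `x`
have slope below `M - 2δ`, while before the move one of them exceeds `M - δ`; for large `k` the
factor `exp (kδ)` beats the number of edges, so the move strictly decreases `Φₖ` at a
minimizer, which is absurd. Finally, projection onto the ball brings a point closer to every
point of the ball, where all values of `u` lie, so optimality within the ball suffices.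
-/

open Filter Function Metric Set Topology Real

lemma Finset.sum_lt_sum_of_card_mul_lt {ι : Type*} {s : Finset ι} (p : ι → Prop)
    [DecidablePred p] {f g : ι → ℝ} {c : ℝ} {j : ι} (hfg : ∀ i ∈ s, ¬p i → f i = g i)
    (hf : ∀ i ∈ s, p i → f i ≤ c) (hc : 0 ≤ c) (hg : ∀ i ∈ s, 0 ≤ g i) (hj : j ∈ s)
    (hpj : p j) (hgj : s.card * c < g j) : ∑ i ∈ s, f i < ∑ i ∈ s, g i := by
  rw [← Finset.sum_filter_add_sum_filter_not s p f, ← Finset.sum_filter_add_sum_filter_not s p g,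
    Finset.sum_congr rfl fun i hi => hfg i (Finset.mem_filter.1 hi).1 (Finset.mem_filter.1 hi).2]
  refine add_lt_add_left ?_ _
  calc ∑ i ∈ s.filter p, f i ≤ (s.filter p).card * c := by
        simpa only [nsmul_eq_mul] using Finset.sum_le_card_nsmul _ f c
          fun i hi => hf i (Finset.mem_filter.1 hi).1 (Finset.mem_filter.1 hi).2
    _ ≤ s.card * c := by gcongr; exact Finset.filter_subset p s
    _ < g j := hgj
    _ ≤ ∑ i ∈ s.filter p, g i :=
        Finset.single_le_sum (fun i hi => hg i (Finset.mem_filter.1 hi).1)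
          (Finset.mem_filter.2 ⟨hj, hpj⟩)

lemma Convex.exists_mem_forall_dist_le {F : Type*} [NormedAddCommGroup F] [InnerProductSpace ℝ F]
    {K : Set F} (hK : Convex ℝ K) (hKc : IsComplete K) (hne : K.Nonempty) (y : F) :
    ∃ z ∈ K, ∀ p ∈ K, dist p z ≤ dist p y := by
  obtain ⟨z, hz, hzmin⟩ := exists_norm_eq_iInf_of_complete_convex hne hKc hK y
  have hobtuse := (norm_eq_iInf_iff_real_inner_le_zero hK hz).1 hzmin
  refine ⟨z, hz, fun p hp => ?_⟩
  rw [dist_eq_norm, dist_eq_norm]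
  refine le_of_pow_le_pow_left₀ two_ne_zero (norm_nonneg _) ?_
  rw [show p - y = (p - z) - (y - z) by abel, norm_sub_sq_real (p - z) (y - z), real_inner_comm]
  nlinarith [hobtuse p hp, sq_nonneg ‖y - z‖]

section SlopeEnergy

variable {α F : Type*} [PseudoMetricSpace α] [PseudoMetricSpace F]

/-- The paper's `max_{a ∈ S(x)} ‖u a - y‖ / ‖a - x‖`, minimized at `y = K(u, S(x))(x)`, where
`S(x) = {a | (x, a) ∈ E}`. -/
noncomputable def localLip (E : Finset (α × α)) (u : α → F) (x : α) (y : F) : ℝ :=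
  sSup ((fun a => dist (u a) y / dist a x) '' {a | (x, a) ∈ E})

noncomputable def softmaxEnergy (E : Finset (α × α)) (t : ℝ) (u : α → F) : ℝ :=
  ∑ e ∈ E, exp (t * (dist (u e.1) (u e.2) / dist e.1 e.2))

variable {E : Finset (α × α)} {u : α → F} {x : α} {y : F}

lemma div_dist_le_localLip {a : α} (ha : (x, a) ∈ E) :
    dist (u a) y / dist a x ≤ localLip E u x y := by
  have hfin : {a | (x, a) ∈ E}.Finite :=
    (E.finite_toSet.image Prod.snd).subset fun a ha => ⟨(x, a), ha, rfl⟩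
  exact le_csSup (hfin.image _).bddAbove (mem_image_of_mem _ ha)

lemma localLip_nonneg : 0 ≤ localLip E u x y :=
  Real.sSup_nonneg <| by rintro _ ⟨a, -, rfl⟩; positivity

lemma localLip_le {c : ℝ} (h : ∀ a, (x, a) ∈ E → dist (u a) y / dist a x ≤ c) (hc : 0 ≤ c) :
    localLip E u x y ≤ c :=
  Real.sSup_le (by rintro _ ⟨a, ha, rfl⟩; exact h a ha) hc

lemma exists_lt_div_dist_of_lt_localLip {c : ℝ} (hc : 0 ≤ c) (h : c < localLip E u x y) :
    ∃ a, (x, a) ∈ E ∧ c < dist (u a) y / dist a x := by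
  by_contra! H
  exact (localLip_le H hc).not_gt h

lemma localLip_mono {y' : F} (h : ∀ a, (x, a) ∈ E → dist (u a) y ≤ dist (u a) y') :
    localLip E u x y ≤ localLip E u x y' :=
  localLip_le (fun a ha => (div_le_div_of_nonneg_right (h a ha) dist_nonneg).trans
    (div_dist_le_localLip ha)) localLip_nonneg

lemma continuous_softmaxEnergy (E : Finset (α × α)) (t : ℝ) :
    Continuous (softmaxEnergy E t : (α → F) → ℝ) :=
  continuous_finsetSum _ fun e _ => continuous_exp.comp <| continuous_const.mul <|
    ((continuous_apply e.1).dist (continuous_apply e.2)).div_const _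

/- For `a = x` both sides are `0`, by the junk value of division by `dist x x = 0`. -/
lemma dist_update_div_dist [DecidableEq α] (u : α → F) (x a : α) (z : F) :
    dist (update u x z a) z / dist a x = dist (u a) z / dist a x := by
  rcases eq_or_ne a x with rfl | hax
  · simp
  · rw [update_of_ne hax]

lemma softmaxEnergy_update_lt [DecidableEq α] (hE : ∀ e ∈ E, e.swap ∈ E) {b : α} {z : F}
    {t A B : ℝ} (ht : 0 ≤ t) (hA : ∀ a, (x, a) ∈ E → dist (u a) z / dist a x ≤ A)
    (hb : (x, b) ∈ E) (hB : B < dist (u b) (u x) / dist b x)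
    (hcard : E.card * exp (t * A) < exp (t * B)) :
    softmaxEnergy E t (update u x z) < softmaxEnergy E t u := by
  have hslope : ∀ e ∈ E, e.1 = x ∨ e.2 = x →
      dist (update u x z e.1) (update u x z e.2) / dist e.1 e.2 ≤ A := by
    rintro ⟨a, c⟩ he (rfl | rfl)
    · rw [update_self, dist_comm, dist_comm a, dist_update_div_dist]
      exact hA c he
    · rw [update_self, dist_update_div_dist]
      exact hA a (hE _ he)
  refine Finset.sum_lt_sum_of_card_mul_lt (fun e => e.1 = x ∨ e.2 = x) (c := exp (t * A))
    (fun e _ he => ?_) (fun e he hex => exp_le_exp.2 (mul_le_mul_of_nonneg_left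
      (hslope e he hex) ht)) (exp_pos _).le (fun _ _ => (exp_pos _).le) hb (Or.inl rfl)
    (hcard.trans_le (exp_le_exp.2 (mul_le_mul_of_nonneg_left ?_ ht)))
  · obtain ⟨h₁, h₂⟩ := not_or.1 he
    rw [update_of_ne h₁, update_of_ne h₂]
  · rw [dist_comm, dist_comm x]
    exact hB.le

theorem localLip_le_of_mapClusterPt (hE : ∀ e ∈ E, e.swap ∈ E) {K : α → Set F}
    {v : ℕ → α → F} (hvK : ∀ k, v k ∈ univ.pi K)
    (hv : ∀ k : ℕ, IsMinOn (softmaxEnergy E k) (univ.pi K) (v k))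
    (hu : MapClusterPt u atTop v) {z : F} (hz : z ∈ K x) :
    localLip E u x (u x) ≤ localLip E u x z := by
  classical
  by_contra! hlt
  set M := localLip E u x (u x)
  set g := localLip E u x z
  obtain ⟨δ, hδ, hMδ⟩ : ∃ δ, 0 < δ ∧ g + 3 * δ = M := ⟨(M - g) / 3, by linarith, by ring⟩
  obtain ⟨b, hb, hMb⟩ := exists_lt_div_dist_of_lt_localLip (c := M - δ)
    (by linarith [localLip_nonneg (E := E) (u := u) (x := x) (y := z)]) (by linarith)
  have hnear : ∀ᶠ w in 𝓝 u, ∀ e ∈ E, e.1 = x → dist (w e.2) z / dist e.2 x < g + δ := by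
    refine (eventually_all_finset E).2 fun ⟨a, c⟩ he => ?_
    rcases eq_or_ne a x with rfl | hax
    · have hlim := (((continuous_apply c).dist (continuous_const (y := z))).div_const
        (dist c a)).tendsto u
      exact (hlim.eventually_lt_const ((div_dist_le_localLip he).trans_lt (by linarith))).mono
        fun _ h _ => h
    · exact Eventually.of_forall fun _ h => absurd h hax
  have hfar : ∀ᶠ w in 𝓝 u, M - δ < dist (w b) (w x) / dist b x :=
    ((((continuous_apply b).dist (continuous_apply x)).div_const _).tendsto u).eventually_const_lt
      hMb
  have hlarge : ∀ᶠ k : ℕ in atTop, (E.card : ℝ) < exp (k * δ) :=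
    (tendsto_exp_atTop.comp (tendsto_natCast_atTop_atTop.atTop_mul_const hδ)).eventually_gt_atTop _
  obtain ⟨k, ⟨hnear_k, hfar_k⟩, hlarge_k⟩ :=
    ((hu.frequently (hnear.and hfar)).and_eventually hlarge).exists
  have hcard : E.card * exp (k * (g + δ)) < exp (k * (M - δ)) :=
    calc E.card * exp (k * (g + δ)) < exp (k * δ) * exp (k * (g + δ)) :=
          mul_lt_mul_of_pos_right hlarge_k (exp_pos _)
      _ = exp (k * (M - δ)) := by rw [← exp_add]; congr 1; linear_combination (k : ℝ) * hMδ
  have hdecr := softmaxEnergy_update_lt hE (Nat.cast_nonneg k)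
    (fun a ha => (hnear_k _ ha rfl).le) hb hfar_k hcard
  exact hdecr.not_ge <| hv k <| (update_mem_pi_iff_of_mem (hvK k)).2 fun _ => hz

theorem exists_forall_localLip_le (hE : ∀ e ∈ E, e.swap ∈ E) {K : α → Set F}
    (hK : ∀ a, IsCompact (K a)) (hKne : ∀ a, (K a).Nonempty) :
    ∃ u ∈ univ.pi K, ∀ x, ∀ z ∈ K x, localLip E u x (u x) ≤ localLip E u x z := by
  have hC : IsCompact (univ.pi K) := isCompact_univ_pi hK
  choose v hvK hv using fun k : ℕ =>
    hC.exists_isMinOn (univ_pi_nonempty_iff.2 hKne) (continuous_softmaxEnergy E k).continuousOn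
  obtain ⟨u, hu, hclus⟩ := hC.exists_mapClusterPt (f := atTop)
    (tendsto_principal.2 (Eventually.of_forall hvK))
  exact ⟨u, hu, fun x z hz => localLip_le_of_mapClusterPt hE hvK hv hclus hz⟩

end SlopeEnergy

lemma localLip_le_of_forall_mem_convex {α F : Type*} [PseudoMetricSpace α]
    [NormedAddCommGroup F] [InnerProductSpace ℝ F] {E : Finset (α × α)} {u : α → F} {x : α}
    {K : Set F} (hK : Convex ℝ K) (hKc : IsComplete K) (hne : K.Nonempty)
    (hnbr : ∀ a, (x, a) ∈ E → u a ∈ K) (hmin : ∀ z ∈ K, localLip E u x (u x) ≤ localLip E u x z)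
    (y : F) : localLip E u x (u x) ≤ localLip E u x y := by
  obtain ⟨z, hz, hzy⟩ := hK.exists_mem_forall_dist_le hKc hne y
  exact (hmin z hz).trans (localLip_mono fun a ha => hzy _ (hnbr a ha))

theorem exists_kirszbraun_extension_general (n m : ℕ)
    (V : Finset (EuclideanSpace ℝ (Fin n)))
    (Adj : EuclideanSpace ℝ (Fin n) → EuclideanSpace ℝ (Fin n) → Prop)
    (hsymm : ∀ x y, Adj x y → Adj y x)
    (Ω : Finset (EuclideanSpace ℝ (Fin n)))
    (f : EuclideanSpace ℝ (Fin n) → EuclideanSpace ℝ (Fin m)) :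
    ∃ u : EuclideanSpace ℝ (Fin n) → EuclideanSpace ℝ (Fin m),
      (∀ z ∈ Ω, u z = f z) ∧
      (∀ x ∈ V, x ∉ Ω → ∀ z : EuclideanSpace ℝ (Fin m),
        sSup {r : ℝ | ∃ a ∈ V, Adj x a ∧ r = ‖u a - u x‖ / ‖a - x‖}
          ≤ sSup {r : ℝ | ∃ a ∈ V, Adj x a ∧ r = ‖u a - z‖ / ‖a - x‖}) := by
  classical
  set E := (V ×ˢ V).filter fun e => Adj e.1 e.2
  have hE : ∀ e ∈ E, e.swap ∈ E := fun e he => by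
    simp only [E, Finset.mem_filter, Finset.mem_product, Prod.fst_swap, Prod.snd_swap] at he ⊢
    exact ⟨he.1.symm, hsymm _ _ he.2⟩
  set R := ∑ a ∈ V, ‖f a‖
  have hR : 0 ≤ R := Finset.sum_nonneg fun _ _ => norm_nonneg _
  set K : EuclideanSpace ℝ (Fin n) → Set (EuclideanSpace ℝ (Fin m)) :=
    fun a => if a ∈ V \ Ω then closedBall 0 R else {f a}
  obtain ⟨u, hu, hmin⟩ := exists_forall_localLip_le hE (K := K)
    (fun a => by dsimp only [K]; split_ifs; exacts [isCompact_closedBall 0 R, isCompact_singleton])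
    (fun a => by dsimp only [K]; split_ifs; exacts [nonempty_closedBall.2 hR, singleton_nonempty _])
  have hball : ∀ a ∈ V, u a ∈ closedBall 0 R := fun a ha => by
    have hua := hu a trivial
    dsimp only [K] at hua
    split_ifs at hua
    · exact hua
    · rw [mem_singleton_iff.1 hua, mem_closedBall_zero_iff]
      exact Finset.single_le_sum (fun _ _ => norm_nonneg _) ha
  refine ⟨u, fun z hz => by simpa [K, hz] using hu z trivial, fun x hxV hxΩ y => ?_⟩
  have hS : ∀ y, {r | ∃ a ∈ V, Adj x a ∧ r = ‖u a - y‖ / ‖a - x‖} =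
      (fun a => dist (u a) y / dist a x) '' {a | (x, a) ∈ E} := fun y => by
    ext r
    simp [E, hxV, dist_eq_norm, eq_comm, and_assoc]
  rw [hS, hS]
  exact localLip_le_of_forall_mem_convex (convex_closedBall 0 R) isClosed_closedBall.isComplete
    (nonempty_closedBall.2 hR)
    (fun a ha => hball a (Finset.mem_product.1 (Finset.mem_filter.1 ha).1).2)
    (fun z hz => hmin x z (by simpa [K, hxV, hxΩ] using hz)) y

/-- on a finite connected graph `G = (V, E, Ω)` with `V ⊆ ℝⁿ`, adjacent
vertices distinct, each vertex of `V \ Ω` having a nonempty neighborhood, and `Ω ⊆ V`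
nonempty, every `f : Ω → ℝᵐ` admits a Kirszbraun extension `u`: a function with `u = f`
on `Ω` such that for every `x ∈ V \ Ω`, `u x` minimizes
`y ↦ max_{a ∈ S(x)} ‖u a - y‖ / ‖a - x‖` (i.e. `u x = K(u, S(x))(x)`). -/
theorem exists_kirszbraun_extension (n m : ℕ)
    (V : Finset (EuclideanSpace ℝ (Fin n)))
    (Adj : EuclideanSpace ℝ (Fin n) → EuclideanSpace ℝ (Fin n) → Prop)
    (hsymm : ∀ x y, Adj x y → Adj y x)
    (hne : ∀ x y, Adj x y → x ≠ y)
    (hconn : ∀ x ∈ V, ∀ y ∈ V,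
      Relation.ReflTransGen (fun a b => a ∈ V ∧ b ∈ V ∧ Adj a b) x y)
    (Ω : Finset (EuclideanSpace ℝ (Fin n))) (hΩ : Ω.Nonempty) (hΩV : Ω ⊆ V)
    (hnbr : ∀ x ∈ V, x ∉ Ω → ∃ y ∈ V, Adj x y)
    (f : EuclideanSpace ℝ (Fin n) → EuclideanSpace ℝ (Fin m)) :
    ∃ u : EuclideanSpace ℝ (Fin n) → EuclideanSpace ℝ (Fin m),
      (∀ z ∈ Ω, u z = f z) ∧
      (∀ x ∈ V, x ∉ Ω → ∀ z : EuclideanSpace ℝ (Fin m),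
        sSup {r : ℝ | ∃ a ∈ V, Adj x a ∧ r = ‖u a - u x‖ / ‖a - x‖}
          ≤ sSup {r : ℝ | ∃ a ∈ V, Adj x a ∧ r = ‖u a - z‖ / ‖a - x‖}) :=
  exists_kirszbraun_extension_general n m V Adj hsymm Ω f
end

section
/- Let S = {x₁,…,x_N} ⊂ ℝⁿ be a finite set, u : S → ℝ, x ∈ ℝⁿ \ S, and write d_i = ‖x_i − x‖. If the pair of indices (i,j) satisfies |u(x_i)−u(x_j)|/(d_i+d_j) = max_{k,l} |u(x_k)−u(x_l)|/(d_k+d_l), then K(u,S)(x) = (d_i·u(x_j) + d_j·u(x_i))/(d_i + d_j). -/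
/-!
Write `d k = ‖p k - x‖`, `v k = u (p k)`, let `M = |v i - v j| / (d i + d j)` be the maximal
pair slope and `y = (d i * v j + d j * v i) / (d i + d j)` the point splitting `[v j, v i]` in
the ratio `d j : d i`. Going through `v i` or `v j`, maximality of the pair gives
`|v k - y| ≤ d k * M` for every `k`, so the minimal value is at most `M`. Conversely, residuals
`|v i - K| ≤ d i * M` and `|v j - K| ≤ d j * M` leave no slack, since
`|v i - v j| = (d i + d j) * M`; hence `K = y`.
-/

section
variable {ι : Type*} {d v : ι → ℝ} {i j : ι}

noncomputable def pairSlope (d v : ι → ℝ) (i j : ι) : ℝ := |v i - v j| / (d i + d j)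

noncomputable def crossMean (d v : ι → ℝ) (i j : ι) : ℝ :=
  (d i * v j + d j * v i) / (d i + d j)

theorem pairSlope_comm (d v : ι → ℝ) (i j : ι) : pairSlope d v i j = pairSlope d v j i := by
  rw [pairSlope, pairSlope, abs_sub_comm, add_comm]

theorem crossMean_comm (d v : ι → ℝ) (i j : ι) : crossMean d v i j = crossMean d v j i := by
  rw [crossMean, crossMean, add_comm (d i * v j), add_comm (d i)]

theorem sub_eq_mul_pairSlope_add_mul_pairSlope (hd : ∀ k, 0 < d k) (hji : v j ≤ v i) :
    v i - v j = d i * pairSlope d v i j + d j * pairSlope d v i j := by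
  rw [pairSlope, abs_of_nonneg (sub_nonneg.mpr hji)]
  field_simp [(add_pos (hd i) (hd j)).ne']

theorem crossMean_eq_sub_mul_pairSlope (hd : ∀ k, 0 < d k) (hji : v j ≤ v i) :
    crossMean d v i j = v i - d i * pairSlope d v i j := by
  rw [crossMean, div_eq_iff (add_pos (hd i) (hd j)).ne']
  linear_combination (-d i) * sub_eq_mul_pairSlope_add_mul_pairSlope hd hji

theorem abs_sub_crossMean_le_of_pairSlope_le (hd : ∀ k, 0 < d k)
    (hij : ∀ k l, pairSlope d v k l ≤ pairSlope d v i j) (k : ι) :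
    |v k - crossMean d v i j| ≤ d k * pairSlope d v i j := by
  wlog hji : v j ≤ v i generalizing i j
  · rw [pairSlope_comm] at hij
    rw [pairSlope_comm, crossMean_comm]
    exact this hij (le_of_not_ge hji)
  set M := pairSlope d v i j
  have hslope : ∀ l m, |v l - v m| ≤ d l * M + d m * M := fun l m => by
    rw [← add_mul, ← div_le_iff₀' (add_pos (hd l) (hd m))]
    exact hij l m
  rw [crossMean_eq_sub_mul_pairSlope hd hji, abs_le]
  constructor
  · linarith [le_abs_self (v i - v k), hslope i k]
  · linarith [le_abs_self (v k - v j), hslope k j, sub_eq_mul_pairSlope_add_mul_pairSlope hd hji]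

theorem eq_crossMean_of_abs_sub_le (hd : ∀ k, 0 < d k) {K : ℝ}
    (hi : |v i - K| ≤ d i * pairSlope d v i j) (hj : |v j - K| ≤ d j * pairSlope d v i j) :
    K = crossMean d v i j := by
  wlog hji : v j ≤ v i generalizing i j
  · rw [pairSlope_comm] at hi hj
    rw [crossMean_comm]
    exact this hj hi (le_of_not_ge hji)
  rw [crossMean_eq_sub_mul_pairSlope hd hji]
  linarith [le_abs_self (v i - K), le_abs_self (K - v j), abs_sub_comm (v j) K,
    sub_eq_mul_pairSlope_add_mul_pairSlope hd hji]

theorem sSup_exists_eq_le_iff [Finite ι] [Nonempty ι] {f : ι → ℝ} {c : ℝ} :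
    sSup {r | ∃ k, r = f k} ≤ c ↔ ∀ k, f k ≤ c := by
  have hrange : {r | ∃ k, r = f k} = Set.range f := by
    ext r
    exact exists_congr fun k => eq_comm
  rw [hrange]
  exact ciSup_le_iff (Set.finite_range f).bddAbove

theorem eq_crossMean_of_sSup_le_of_pairSlope_le [Finite ι] (hd : ∀ k, 0 < d k)
    (hij : ∀ k l, pairSlope d v k l ≤ pairSlope d v i j) {K : ℝ}
    (hK : sSup {r | ∃ k, r = |v k - K| / d k}
      ≤ sSup {r | ∃ k, r = |v k - crossMean d v i j| / d k}) :
    K = crossMean d v i j := by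
  have : Nonempty ι := ⟨i⟩
  have hres : ∀ k, |v k - K| ≤ d k * pairSlope d v i j := by
    simp_rw [← div_le_iff₀' (hd _)]
    refine sSup_exists_eq_le_iff.mp (hK.trans (sSup_exists_eq_le_iff.mpr fun k => ?_))
    rw [div_le_iff₀' (hd k)]
    exact abs_sub_crossMean_le_of_pairSlope_le hd hij k
  exact eq_crossMean_of_abs_sub_le hd (hres i) (hres j)

end

theorem kirszbraun_real_oberman_formula_general (n N : ℕ)
    (p : Fin N → EuclideanSpace ℝ (Fin n))
    (u : EuclideanSpace ℝ (Fin n) → ℝ)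
    (x : EuclideanSpace ℝ (Fin n)) (hx : x ∉ Set.range p)
    (i j : Fin N)
    (hij : ∀ k l : Fin N,
      |u (p k) - u (p l)| / (‖p k - x‖ + ‖p l - x‖)
        ≤ |u (p i) - u (p j)| / (‖p i - x‖ + ‖p j - x‖))
    (K : ℝ)
    -- K = K(u,S)(x) is the minimizer of y ↦ max_{a ∈ S} |u a - y| / ‖a - x‖
    (hK : ∀ z : ℝ,
      sSup {r : ℝ | ∃ k : Fin N, r = |u (p k) - K| / ‖p k - x‖}
        ≤ sSup {r : ℝ | ∃ k : Fin N, r = |u (p k) - z| / ‖p k - x‖}) :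
    K = (‖p i - x‖ * u (p j) + ‖p j - x‖ * u (p i)) / (‖p i - x‖ + ‖p j - x‖) := by
  have hd : ∀ k, 0 < ‖p k - x‖ := fun k =>
    norm_pos_iff.mpr (sub_ne_zero.mpr fun h => hx ⟨k, h⟩)
  exact eq_crossMean_of_sSup_le_of_pairSlope_le (v := fun k => u (p k)) hd hij (hK _)

/-- Oberman's formula: let `S = {x₁, …, x_N} ⊆ ℝⁿ`, `u : S → ℝ`,
`x ∈ ℝⁿ \ S`, and `d_k = ‖x_k - x‖`. If the pair `(i, j)` maximizes
`|u x_k - u x_l| / (d_k + d_l)` over all pairs `(k, l)`, then the Kirszbraun value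
`K(u,S)(x)` (the unique minimizer of `y ↦ max_{a ∈ S} |u a - y| / ‖a - x‖`) equals
`(d_i * u x_j + d_j * u x_i) / (d_i + d_j)`. -/
theorem kirszbraun_real_oberman_formula (n N : ℕ) (hN : 0 < N)
    (p : Fin N → EuclideanSpace ℝ (Fin n)) (hp : Function.Injective p)
    (u : EuclideanSpace ℝ (Fin n) → ℝ)
    (x : EuclideanSpace ℝ (Fin n)) (hx : x ∉ Set.range p)
    (i j : Fin N)
    (hij : ∀ k l : Fin N,
      |u (p k) - u (p l)| / (‖p k - x‖ + ‖p l - x‖)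
        ≤ |u (p i) - u (p j)| / (‖p i - x‖ + ‖p j - x‖))
    (K : ℝ)
    -- K = K(u,S)(x) is the minimizer of y ↦ max_{a ∈ S} |u a - y| / ‖a - x‖
    (hK : ∀ z : ℝ,
      sSup {r : ℝ | ∃ k : Fin N, r = |u (p k) - K| / ‖p k - x‖}
        ≤ sSup {r : ℝ | ∃ k : Fin N, r = |u (p k) - z| / ‖p k - x‖}) :
    K = (‖p i - x‖ * u (p j) + ‖p j - x‖ * u (p i)) / (‖p i - x‖ + ‖p j - x‖) :=
  kirszbraun_real_oberman_formula_general n N p u x hx i j hij K hK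
end

section
/- Let G = (V,E,Ω) be a finite connected graph with V ⊂ ℝⁿ (adjacent vertices distinct as points, each vertex of V \ Ω having nonempty neighborhood), Ω ⊆ V nonempty, and f : Ω → ℝ real-valued. Then there is exactly one Kirszbraun extension u of f on G: if u and h both satisfy u = f = h on Ω, u(x) = K(u,S(x))(x) and h(x) = K(h,S(x))(x) for all x ∈ V \ Ω, then u = h. -/
/-!
At a vertex `x` where `v x = K(v, S(x))(x)`, the steepest upward slope from `v x` to a neighbour
equals the steepest downward one: otherwise moving `v x` towards the steeper side would lower the
maximal slope. Suppose `u - h` had a positive maximum on `V`, and among its maximizers pick the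
ones where `h` is largest. At such a vertex, comparing the balanced slopes of `u` and `h` forces
both functions to be constant on its neighbourhood, so this set of vertices is closed under edges.
By connectedness it meets `Ω`, where `u - h = 0`.
-/

open Finset

section Slopes

variable {α : Type*} {N : Finset α} (hN : N.Nonempty) {d : α → ℝ}

lemma sup'_sub_div_le_of_minimizer (hd : ∀ a ∈ N, 0 < d a) {v : α → ℝ} {z₀ : ℝ}
    (hmin : ∀ z, N.sup' hN (fun a => |v a - z₀| / d a) ≤ N.sup' hN (fun a => |v a - z| / d a)) :
    N.sup' hN (fun a => (v a - z₀) / d a) ≤ N.sup' hN (fun a => (z₀ - v a) / d a) := by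
  set P := N.sup' hN (fun a => (v a - z₀) / d a)
  set Q := N.sup' hN (fun a => (z₀ - v a) / d a)
  set δ := N.inf' hN d
  have hδ : 0 < δ := (lt_inf'_iff hN).2 hd
  by_contra! hQP
  -- raising `z₀` by `ε` lowers every upward slope and raises each downward one by at most `ε / δ`
  set ε := (P - Q) * δ / 2
  have hε : 0 < ε := by have := sub_pos.2 hQP; positivity
  have hshift : N.sup' hN (fun a => |v a - (z₀ + ε)| / d a) < P := by
    refine (sup'_lt_iff hN).2 fun a ha => ?_
    have hda := hd a ha
    have hδa : δ ≤ d a := inf'_le d ha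
    have hup : v a - z₀ ≤ P * d a := (div_le_iff₀ hda).1 (le_sup' (fun a => (v a - z₀) / d a) ha)
    have hdown : z₀ - v a ≤ Q * d a :=
      (div_le_iff₀ hda).1 (le_sup' (fun a => (z₀ - v a) / d a) ha)
    have hεa : ε < (P - Q) * d a := by
      have := mul_le_mul_of_nonneg_left hδa (sub_pos.2 hQP).le
      have := mul_pos (sub_pos.2 hQP) hδ
      simp only [ε]
      linarith
    rw [div_lt_iff₀ hda, abs_lt]
    constructor <;> linarith
  have hP : P ≤ N.sup' hN (fun a => |v a - z₀| / d a) :=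
    sup'_le hN _ fun a ha => le_sup'_of_le _ ha <|
      div_le_div_of_nonneg_right (le_abs_self _) (hd a ha).le
  exact hshift.not_ge (hP.trans (hmin _))

lemma sup'_sub_div_eq_of_minimizer (hd : ∀ a ∈ N, 0 < d a) {v : α → ℝ} {z₀ : ℝ}
    (hmin : ∀ z, N.sup' hN (fun a => |v a - z₀| / d a) ≤ N.sup' hN (fun a => |v a - z| / d a)) :
    N.sup' hN (fun a => (v a - z₀) / d a) = N.sup' hN (fun a => (z₀ - v a) / d a) := by
  refine le_antisymm (sup'_sub_div_le_of_minimizer hN hd hmin) ?_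
  have hneg := sup'_sub_div_le_of_minimizer hN hd (v := fun a => -v a) (z₀ := -z₀) fun z => by
    have e : ∀ a c, |-v a - c| = |v a - -c| := fun a c => by rw [← abs_neg]; ring_nf
    simpa only [e, neg_neg] using hmin (-z)
  simpa only [neg_sub_neg] using hneg

lemma eq_of_sup'_sub_div_eq_of_nonpos (hd : ∀ a ∈ N, 0 < d a) {v : α → ℝ} {c : ℝ}
    (hbal : N.sup' hN (fun a => (v a - c) / d a) = N.sup' hN (fun a => (c - v a) / d a))
    (hle : N.sup' hN (fun a => (v a - c) / d a) ≤ 0) : ∀ a ∈ N, v a = c := by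
  intro a ha
  have hup : (v a - c) / d a ≤ 0 := (le_sup' (fun a => (v a - c) / d a) ha).trans hle
  have hdown : (c - v a) / d a ≤ 0 := (le_sup' (fun a => (c - v a) / d a) ha).trans (hbal ▸ hle)
  rw [div_le_iff₀ (hd a ha), zero_mul] at hup hdown
  linarith

lemma eq_on_of_sup'_sub_div_eq (hd : ∀ a ∈ N, 0 < d a) {u h : α → ℝ} {ux hx : ℝ}
    (hu : N.sup' hN (fun a => (u a - ux) / d a) = N.sup' hN (fun a => (ux - u a) / d a))
    (hh : N.sup' hN (fun a => (h a - hx) / d a) = N.sup' hN (fun a => (hx - h a) / d a))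
    (hsub : ∀ a ∈ N, u a - h a ≤ ux - hx)
    (htop : ∀ a ∈ N, u a - h a = ux - hx → h a ≤ hx) :
    ∀ a ∈ N, u a = ux ∧ h a = hx := by
  obtain ⟨b, hb, hPu⟩ := exists_mem_eq_sup' hN (fun a => (u a - ux) / d a)
  set Pu := N.sup' hN (fun a => (u a - ux) / d a)
  set Ph := N.sup' hN (fun a => (h a - hx) / d a)
  have hPu_le : Pu ≤ Ph := sup'_mono_fun fun a ha =>
    div_le_div_of_nonneg_right (by linarith [hsub a ha]) (hd a ha).le
  have hPh_le : Ph ≤ Pu := by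
    rw [hu, hh]
    exact sup'_mono_fun fun a ha => div_le_div_of_nonneg_right (by linarith [hsub a ha]) (hd a ha).le
  -- along a steepest upward edge of `u`, `h` rises at least as steeply, so `u - h` stays maximal
  have hslope : (u b - ux) / d b = (h b - hx) / d b :=
    le_antisymm (div_le_div_of_nonneg_right (by linarith [hsub b hb]) (hd b hb).le)
      (hPu ▸ hPh_le.trans' (le_sup' (fun a => (h a - hx) / d a) hb))
  have hbsub : u b - ux = h b - hx := (div_left_inj' (hd b hb).ne').1 hslope
  have hPu_nonpos : Pu ≤ 0 := by
    rw [hPu]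
    exact div_nonpos_of_nonpos_of_nonneg (by linarith [htop b hb (by linarith)]) (hd b hb).le
  intro a ha
  exact ⟨eq_of_sup'_sub_div_eq_of_nonpos hN hd hu hPu_nonpos a ha,
    eq_of_sup'_sub_div_eq_of_nonpos hN hd hh (hPh_le.trans hPu_nonpos) a ha⟩

end Slopes

lemma sSup_exists_mem_and_eq_eq_sup' {α : Type*} (s : Finset α) (p : α → Prop) [DecidablePred p]
    (g : α → ℝ) (hs : (s.filter p).Nonempty) :
    sSup {r : ℝ | ∃ a ∈ s, p a ∧ r = g a} = (s.filter p).sup' hs g := by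
  rw [sup'_eq_csSup_image]
  congr 1
  ext r
  simp [eq_comm, and_assoc]

section Graph

variable {E : Type*} [NormedAddCommGroup E] {V Ω : Finset E} {Adj : E → E → Prop}

/-- `v x = K(v, S(x))(x)`, for the neighbourhood `S(x) = {a ∈ V | Adj x a}`. -/
def IsKirszbraunAt (V : Finset E) (Adj : E → E → Prop) (v : E → ℝ) (x : E) : Prop :=
  ∀ z : ℝ, sSup {r : ℝ | ∃ a ∈ V, Adj x a ∧ r = |v a - v x| / ‖a - x‖}
    ≤ sSup {r : ℝ | ∃ a ∈ V, Adj x a ∧ r = |v a - z| / ‖a - x‖}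

lemma IsKirszbraunAt.eq_on_neighbors {u h : E → ℝ} {x y : E} (hne : ∀ a, Adj x a → x ≠ a)
    (hy : y ∈ V) (hxy : Adj x y) (hu : IsKirszbraunAt V Adj u x) (hh : IsKirszbraunAt V Adj h x)
    (hsub : ∀ a ∈ V, Adj x a → u a - h a ≤ u x - h x)
    (htop : ∀ a ∈ V, Adj x a → u a - h a = u x - h x → h a ≤ h x) :
    ∀ a ∈ V, Adj x a → u a = u x ∧ h a = h x := by
  classical
  have hN : (V.filter (Adj x)).Nonempty := ⟨y, mem_filter.2 ⟨hy, hxy⟩⟩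
  have hd : ∀ a ∈ V.filter (Adj x), 0 < ‖a - x‖ := fun a ha =>
    norm_pos_iff.2 (sub_ne_zero.2 (hne a (mem_filter.1 ha).2).symm)
  have hbal : ∀ v : E → ℝ, IsKirszbraunAt V Adj v x →
      (V.filter (Adj x)).sup' hN (fun a => (v a - v x) / ‖a - x‖)
        = (V.filter (Adj x)).sup' hN (fun a => (v x - v a) / ‖a - x‖) := fun v hv =>
    sup'_sub_div_eq_of_minimizer hN hd fun z => by
      simpa only [sSup_exists_mem_and_eq_eq_sup' V (Adj x) _ hN] using hv z
  intro a ha hxa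
  refine eq_on_of_sup'_sub_div_eq hN hd (hbal u hu) (hbal h hh) (fun b hb => ?_) (fun b hb => ?_)
    a (mem_filter.2 ⟨ha, hxa⟩)
  · exact hsub b (mem_filter.1 hb).1 (mem_filter.1 hb).2
  · exact htop b (mem_filter.1 hb).1 (mem_filter.1 hb).2

lemma le_of_isKirszbraunAt {u h : E → ℝ} (hne : ∀ x y, Adj x y → x ≠ y)
    (hconn : ∀ x ∈ V, ∀ y ∈ V,
      Relation.ReflTransGen (fun a b => a ∈ V ∧ b ∈ V ∧ Adj a b) x y)
    (hΩ : Ω.Nonempty) (hΩV : Ω ⊆ V) (huh : ∀ z ∈ Ω, u z = h z)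
    (hu : ∀ x ∈ V, x ∉ Ω → IsKirszbraunAt V Adj u x)
    (hh : ∀ x ∈ V, x ∉ Ω → IsKirszbraunAt V Adj h x) :
    ∀ x ∈ V, u x ≤ h x := by
  classical
  obtain ⟨ω, hω⟩ := hΩ
  have hV : V.Nonempty := ⟨ω, hΩV hω⟩
  set m := V.sup' hV (fun a => u a - h a)
  suffices hm : m ≤ 0 from fun x hx => sub_nonpos.1 ((le_sup' (fun a => u a - h a) hx).trans hm)
  by_contra! hm
  set F := V.filter (fun a => u a - h a = m)
  obtain ⟨x₁, hx₁, hx₁m⟩ := exists_mem_eq_sup' hV (fun a => u a - h a)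
  have hF : F.Nonempty := ⟨x₁, mem_filter.2 ⟨hx₁, hx₁m.symm⟩⟩
  obtain ⟨x₀, hx₀, hx₀top⟩ := exists_mem_eq_sup' hF h
  set S := F.filter (fun a => h a = h x₀)
  have hSΩ : ∀ x ∈ S, x ∉ Ω := fun x hx hxΩ => by
    simp only [S, F, mem_filter] at hx
    linarith [huh x hxΩ]
  have hclosed : ∀ x ∈ S, ∀ y ∈ V, Adj x y → y ∈ S := by
    intro x hx y hy hxy
    have hxΩ := hSΩ x hx
    simp only [S, F, mem_filter] at hx ⊢
    obtain ⟨⟨hxV, hxm⟩, hxh⟩ := hx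
    have hconst : u y = u x ∧ h y = h x :=
      IsKirszbraunAt.eq_on_neighbors (hne x) hy hxy (hu x hxV hxΩ) (hh x hxV hxΩ)
        (fun a ha _ => hxm ▸ le_sup' (fun a => u a - h a) ha)
        (fun a ha _ hae => hxh ▸ hx₀top ▸ le_sup' h (mem_filter.2 ⟨ha, hae.trans hxm⟩)) y hy hxy
    exact ⟨⟨hy, by rw [hconst.1, hconst.2, hxm]⟩, hconst.2.trans hxh⟩
  have hreach : ∀ y, Relation.ReflTransGen (fun a b => a ∈ V ∧ b ∈ V ∧ Adj a b) x₀ y → y ∈ S :=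
    fun y hy => by
      induction hy with
      | refl => exact mem_filter.2 ⟨hx₀, rfl⟩
      | tail _ hbc ih => exact hclosed _ ih _ hbc.2.1 hbc.2.2
  exact hSΩ ω (hreach ω (hconn x₀ (mem_filter.1 hx₀).1 ω (hΩV hω))) hω

end Graph

theorem kirszbraun_extension_unique_real_general (n : ℕ)
    (V : Finset (EuclideanSpace ℝ (Fin n)))
    (Adj : EuclideanSpace ℝ (Fin n) → EuclideanSpace ℝ (Fin n) → Prop)
    (hne : ∀ x y, Adj x y → x ≠ y)
    (hconn : ∀ x ∈ V, ∀ y ∈ V,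
      Relation.ReflTransGen (fun a b => a ∈ V ∧ b ∈ V ∧ Adj a b) x y)
    (Ω : Finset (EuclideanSpace ℝ (Fin n))) (hΩ : Ω.Nonempty) (hΩV : Ω ⊆ V)
    (f u h : EuclideanSpace ℝ (Fin n) → ℝ)
    (huf : ∀ z ∈ Ω, u z = f z) (hhf : ∀ z ∈ Ω, h z = f z)
    (huK : ∀ x ∈ V, x ∉ Ω → ∀ z : ℝ,
      sSup {r : ℝ | ∃ a ∈ V, Adj x a ∧ r = |u a - u x| / ‖a - x‖}
        ≤ sSup {r : ℝ | ∃ a ∈ V, Adj x a ∧ r = |u a - z| / ‖a - x‖})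
    (hhK : ∀ x ∈ V, x ∉ Ω → ∀ z : ℝ,
      sSup {r : ℝ | ∃ a ∈ V, Adj x a ∧ r = |h a - h x| / ‖a - x‖}
        ≤ sSup {r : ℝ | ∃ a ∈ V, Adj x a ∧ r = |h a - z| / ‖a - x‖}) :
    ∀ x ∈ V, u x = h x := by
  have huh : ∀ z ∈ Ω, u z = h z := fun z hz => (huf z hz).trans (hhf z hz).symm
  intro x hx
  exact le_antisymm (le_of_isKirszbraunAt hne hconn hΩ hΩV huh huK hhK x hx)
    (le_of_isKirszbraunAt hne hconn hΩ hΩV (fun z hz => (huh z hz).symm) hhK huK x hx)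

/-- on a finite connected graph `G = (V, E, Ω)` with `V ⊆ ℝⁿ`, adjacent
vertices distinct, each vertex of `V \ Ω` having a nonempty neighborhood, and `Ω ⊆ V`
nonempty, a real-valued `f : Ω → ℝ` has at most one Kirszbraun extension: if `u` and `h`
both agree with `f` on `Ω` and satisfy `u x = K(u, S(x))(x)` and `h x = K(h, S(x))(x)`
(i.e. their values at each `x ∈ V \ Ω` minimize the corresponding local sup of slopes),
then `u = h` on `V`. -/
theorem kirszbraun_extension_unique_real (n : ℕ)
    (V : Finset (EuclideanSpace ℝ (Fin n)))
    (Adj : EuclideanSpace ℝ (Fin n) → EuclideanSpace ℝ (Fin n) → Prop)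
    (hsymm : ∀ x y, Adj x y → Adj y x)
    (hne : ∀ x y, Adj x y → x ≠ y)
    (hconn : ∀ x ∈ V, ∀ y ∈ V,
      Relation.ReflTransGen (fun a b => a ∈ V ∧ b ∈ V ∧ Adj a b) x y)
    (Ω : Finset (EuclideanSpace ℝ (Fin n))) (hΩ : Ω.Nonempty) (hΩV : Ω ⊆ V)
    (hnbr : ∀ x ∈ V, x ∉ Ω → ∃ y ∈ V, Adj x y)
    (f u h : EuclideanSpace ℝ (Fin n) → ℝ)
    (huf : ∀ z ∈ Ω, u z = f z) (hhf : ∀ z ∈ Ω, h z = f z)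
    (huK : ∀ x ∈ V, x ∉ Ω → ∀ z : ℝ,
      sSup {r : ℝ | ∃ a ∈ V, Adj x a ∧ r = |u a - u x| / ‖a - x‖}
        ≤ sSup {r : ℝ | ∃ a ∈ V, Adj x a ∧ r = |u a - z| / ‖a - x‖})
    (hhK : ∀ x ∈ V, x ∉ Ω → ∀ z : ℝ,
      sSup {r : ℝ | ∃ a ∈ V, Adj x a ∧ r = |h a - h x| / ‖a - x‖}
        ≤ sSup {r : ℝ | ∃ a ∈ V, Adj x a ∧ r = |h a - z| / ‖a - x‖}) :
    ∀ x ∈ V, u x = h x :=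
  kirszbraun_extension_unique_real_general n V Adj hne hconn Ω hΩ hΩV f u h huf hhf huK hhK
end

section
/- Let G = (V,E,Ω) be a finite connected graph with V ⊂ ℝⁿ (adjacent vertices distinct as points, each vertex of V \ Ω having nonempty neighborhood), Ω ⊆ V nonempty, f : Ω → ℝ, and let u be a Kirszbraun extension of f on G. Then sup_{x≠y∈V} |u(x)−u(y)|/d_g(x,y) ≤ sup_{x≠y∈Ω} |f(x)−f(y)|/d_g(x,y), where d_g is the geodesic metric of G. -/
/-!
Let `S` be the largest slope `|u b - u a| / ‖b - a‖` over the edges, attained on an edge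
`x₀ x₁` along which `u` increases. If an interior vertex `x` is entered by an edge of slope `S`
going up, then it is left by an edge of slope `S` going up as well: otherwise lowering `u x`
slightly would lower the largest slope at `x`, against the Kirszbraun minimality. Following such
edges upwards from `x₁` and downwards from `x₀`, `u` is strictly monotone, so both walks stop in
`Ω`, at `p` and `q`, and the chain `q ⋯ x₀ x₁ ⋯ p` shows `S · d_g(q, p) ≤ f p - f q`. Thus every
edge, hence every chain, is Lipschitz with the constant of `f` on `Ω`.
-/

/-- The geodesic metric of the graph with vertex set `V` and adjacency `Adj`:
`d_g(x,y)` is the infimum of lengths `∑ᵢ ‖c (i+1) - c i‖` of chains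
`c 0 = x, …, c k = y` of vertices of `V` with consecutive vertices adjacent. -/
noncomputable def geodDist {n : ℕ} (V : Finset (EuclideanSpace ℝ (Fin n)))
    (Adj : EuclideanSpace ℝ (Fin n) → EuclideanSpace ℝ (Fin n) → Prop)
    (x y : EuclideanSpace ℝ (Fin n)) : ℝ :=
  sInf {r : ℝ | ∃ (k : ℕ) (c : Fin (k + 1) → EuclideanSpace ℝ (Fin n)),
    c 0 = x ∧ c (Fin.last k) = y ∧ (∀ i, c i ∈ V) ∧
    (∀ i : Fin k, Adj (c i.castSucc) (c i.succ)) ∧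
    r = ∑ i : Fin k, ‖c i.succ - c i.castSucc‖}

open Finset Filter Topology

theorem Fin.sum_succ_sub_castSucc {F : Type*} [AddCommGroup F] :
    ∀ {k : ℕ} (c : Fin (k + 1) → F), ∑ i : Fin k, (c i.succ - c i.castSucc) = c (last k) - c 0
  | 0, c => by simp
  | k + 1, c => by
    have h := Fin.sum_succ_sub_castSucc (c ∘ castSucc)
    simp only [Function.comp_apply, ← succ_castSucc] at h
    rw [sum_univ_castSucc, h, succ_last]
    simp

theorem exists_sub_eq_of_forall_exists_le_abs_sub {ι : Type*} {s : Finset ι} {y b : ι → ℝ}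
    {t : ℝ} (hle : ∀ i ∈ s, |y i - t| ≤ b i) (hmin : ∀ z, ∃ i ∈ s, b i ≤ |y i - z|) :
    ∃ i ∈ s, y i - t = b i := by
  by_contra! hlt
  -- otherwise a slightly smaller `t` would make every `|y i - t|` smaller than `b i`
  have hδ : ∀ᶠ δ in 𝓝[>] (0 : ℝ), ∀ i ∈ s, |y i - (t - δ)| < b i := by
    rw [eventually_all_finset]
    intro i hi
    have hi' : y i - t < b i := ((le_abs_self _).trans (hle i hi)).lt_of_ne (hlt i hi)
    filter_upwards [self_mem_nhdsWithin,
      nhdsWithin_le_nhds (eventually_lt_nhds (sub_pos.2 hi'))] with δ (hδ : 0 < δ) hδ'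
    rw [abs_lt]
    constructor <;> linarith [neg_abs_le (y i - t), hle i hi]
  obtain ⟨δ, hδ⟩ := hδ.exists
  obtain ⟨i, hi, hbi⟩ := hmin (t - δ)
  exact (hδ i hi).not_ge hbi

section Slopes

variable {E : Type*} [NormedAddCommGroup E]

/-- Here `z` is a candidate value of `v` at `x`. -/
def neighbourSlopes (V : Finset E) (Adj : E → E → Prop) (v : E → ℝ) (x : E) (z : ℝ) : Set ℝ :=
  {r | ∃ a ∈ V, Adj x a ∧ r = |v a - z| / ‖a - x‖}

def MinimizesLocalSlope (V : Finset E) (Adj : E → E → Prop) (Ω : Finset E) (v : E → ℝ) :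
    Prop :=
  ∀ x ∈ V, x ∉ Ω → ∀ z,
    sSup (neighbourSlopes V Adj v x (v x)) ≤ sSup (neighbourSlopes V Adj v x z)

variable {V Ω : Finset E} {Adj : E → E → Prop} {v : E → ℝ} {x : E}

theorem finite_neighbourSlopes (z : ℝ) : (neighbourSlopes V Adj v x z).Finite :=
  (V.finite_toSet.image fun a => |v a - z| / ‖a - x‖).subset <| by
    rintro r ⟨a, ha, -, rfl⟩
    exact ⟨a, ha, rfl⟩

theorem le_sSup_neighbourSlopes {a : E} (ha : a ∈ V) (hxa : Adj x a) (z : ℝ) :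
    |v a - z| / ‖a - x‖ ≤ sSup (neighbourSlopes V Adj v x z) :=
  le_csSup (finite_neighbourSlopes z).bddAbove ⟨a, ha, hxa, rfl⟩

theorem exists_le_of_le_sSup_neighbourSlopes (hne : ∀ a, Adj x a → x ≠ a) {S z : ℝ}
    (hN : ∃ a ∈ V, Adj x a) (h : S ≤ sSup (neighbourSlopes V Adj v x z)) :
    ∃ a ∈ V, Adj x a ∧ S * ‖a - x‖ ≤ |v a - z| := by
  obtain ⟨a₀, ha₀, hxa₀⟩ := hN
  have hslopes : (neighbourSlopes V Adj v x z).Nonempty := ⟨_, a₀, ha₀, hxa₀, rfl⟩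
  obtain ⟨a, ha, hxa, hr⟩ := hslopes.csSup_mem (finite_neighbourSlopes z)
  refine ⟨a, ha, hxa, ?_⟩
  rw [← le_div_iff₀ (norm_sub_pos_iff.2 (hne a hxa).symm), ← hr]
  exact h

theorem neighbourSlopes_neg (z : ℝ) :
    neighbourSlopes V Adj (-v) x z = neighbourSlopes V Adj v x (-z) := by
  have h : ∀ a, |(-v) a - z| = |v a - -z| := fun a => by
    rw [Pi.neg_apply, ← abs_neg]
    ring_nf
  simp only [neighbourSlopes, h]

theorem MinimizesLocalSlope.neg (h : MinimizesLocalSlope V Adj Ω v) :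
    MinimizesLocalSlope V Adj Ω (-v) := by
  intro x hx hxΩ z
  simp only [neighbourSlopes_neg, Pi.neg_apply, neg_neg]
  exact h x hx hxΩ (-z)

theorem exists_steep_ascent (hne : ∀ a, Adj x a → x ≠ a) {S : ℝ}
    (hmin : ∀ z, sSup (neighbourSlopes V Adj v x (v x)) ≤ sSup (neighbourSlopes V Adj v x z))
    (hedge : ∀ a ∈ V, Adj x a → |v a - v x| ≤ S * ‖a - x‖)
    (hin : ∃ a ∈ V, Adj x a ∧ v x - v a = S * ‖a - x‖) :
    ∃ b ∈ V, Adj x b ∧ v b - v x = S * ‖b - x‖ := by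
  classical
  obtain ⟨a₀, ha₀, hxa₀, h₀⟩ := hin
  have hS : S ≤ sSup (neighbourSlopes V Adj v x (v x)) := by
    refine le_trans ?_ (le_sSup_neighbourSlopes ha₀ hxa₀ _)
    rw [le_div_iff₀ (norm_sub_pos_iff.2 (hne a₀ hxa₀).symm), ← h₀, abs_sub_comm]
    exact le_abs_self _
  obtain ⟨b, hb, hvb⟩ := exists_sub_eq_of_forall_exists_le_abs_sub
    (s := V.filter (Adj x)) (b := fun a => S * ‖a - x‖)
    (fun a ha => hedge a (mem_filter.1 ha).1 (mem_filter.1 ha).2) fun z => by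
      obtain ⟨a, ha, hxa, h⟩ :=
        exists_le_of_le_sSup_neighbourSlopes hne ⟨a₀, ha₀, hxa₀⟩ (hS.trans (hmin z))
      exact ⟨a, mem_filter.2 ⟨ha, hxa⟩, h⟩
  exact ⟨b, (mem_filter.1 hb).1, (mem_filter.1 hb).2, hvb⟩

theorem exists_steepest_edge (hsymm : ∀ a b, Adj a b → Adj b a) (hne : ∀ a b, Adj a b → a ≠ b)
    (v : E → ℝ) (hE : ∃ a ∈ V, ∃ b ∈ V, Adj a b) :
    ∃ S, ∃ x₀ ∈ V, ∃ x₁ ∈ V, Adj x₀ x₁ ∧ v x₁ - v x₀ = S * ‖x₁ - x₀‖ ∧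
      ∀ a ∈ V, ∀ b ∈ V, Adj a b → |v b - v a| ≤ S * ‖b - a‖ := by
  classical
  obtain ⟨a, ha, b, hb, hab⟩ := hE
  have hpos : ∀ a b, Adj a b → 0 < ‖b - a‖ := fun a b h => norm_sub_pos_iff.2 (hne a b h).symm
  let slope : E × E → ℝ := fun e => |v e.2 - v e.1| / ‖e.2 - e.1‖
  obtain ⟨e, he, hmax⟩ := exists_max_image ((V ×ˢ V).filter fun e => Adj e.1 e.2) slope
    ⟨(a, b), by simp [ha, hb, hab]⟩
  simp only [mem_filter, mem_product, and_imp, Prod.forall] at he hmax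
  have hbound : ∀ a ∈ V, ∀ b ∈ V, Adj a b → |v b - v a| ≤ slope e * ‖b - a‖ :=
    fun a ha b hb hab => (div_le_iff₀ (hpos a b hab)).1 (hmax a b ha hb hab)
  have he_eq : |v e.2 - v e.1| = slope e * ‖e.2 - e.1‖ :=
    (div_mul_cancel₀ _ (hpos _ _ he.2).ne').symm
  refine ⟨slope e, ?_⟩
  rcases le_total (v e.1) (v e.2) with h | h
  · rw [abs_of_nonneg (sub_nonneg.2 h)] at he_eq
    exact ⟨e.1, he.1.1, e.2, he.1.2, he.2, he_eq, hbound⟩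
  · rw [abs_of_nonpos (sub_nonpos.2 h), neg_sub, norm_sub_rev] at he_eq
    exact ⟨e.2, he.1.2, e.1, he.1.1, hsymm _ _ he.2, he_eq, hbound⟩

end Slopes

section Graph

variable {n : ℕ} {V : Finset (EuclideanSpace ℝ (Fin n))}
  {Adj : EuclideanSpace ℝ (Fin n) → EuclideanSpace ℝ (Fin n) → Prop}
  {x y : EuclideanSpace ℝ (Fin n)}

def chainLengths (V : Finset (EuclideanSpace ℝ (Fin n)))
    (Adj : EuclideanSpace ℝ (Fin n) → EuclideanSpace ℝ (Fin n) → Prop)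
    (x y : EuclideanSpace ℝ (Fin n)) : Set ℝ :=
  {r : ℝ | ∃ (k : ℕ) (c : Fin (k + 1) → EuclideanSpace ℝ (Fin n)),
    c 0 = x ∧ c (Fin.last k) = y ∧ (∀ i, c i ∈ V) ∧
    (∀ i : Fin k, Adj (c i.castSucc) (c i.succ)) ∧
    r = ∑ i : Fin k, ‖c i.succ - c i.castSucc‖}

theorem geodDist_eq_sInf : geodDist V Adj x y = sInf (chainLengths V Adj x y) := rfl

theorem zero_mem_chainLengths (hx : x ∈ V) : (0 : ℝ) ∈ chainLengths V Adj x x :=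
  ⟨0, fun _ => x, rfl, rfl, fun _ => hx, fun i => i.elim0, by simp⟩

theorem add_norm_mem_chainLengths {b : EuclideanSpace ℝ (Fin n)} {r : ℝ}
    (hr : r ∈ chainLengths V Adj x y) (hb : b ∈ V) (hyb : Adj y b) :
    r + ‖b - y‖ ∈ chainLengths V Adj x b := by
  obtain ⟨k, c, rfl, rfl, hcV, hcadj, rfl⟩ := hr
  refine ⟨k + 1, Fin.snoc c b, ?_, by simp, ?_, ?_, ?_⟩
  · rw [← Fin.castSucc_zero, Fin.snoc_castSucc]
  · intro i
    induction i using Fin.lastCases with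
    | last => simpa using hb
    | cast j => simpa using hcV j
  · intro i
    induction i using Fin.lastCases with
    | last => simpa [Fin.succ_last] using hyb
    | cast j => simpa [Fin.succ_castSucc, -Fin.castSucc_succ] using hcadj j
  · simp [Fin.sum_univ_castSucc, Fin.succ_castSucc, -Fin.castSucc_succ, Fin.succ_last]

theorem mem_chainLengths_comm (hsymm : ∀ a b, Adj a b → Adj b a) {r : ℝ}
    (hr : r ∈ chainLengths V Adj x y) : r ∈ chainLengths V Adj y x := by
  obtain ⟨k, c, rfl, rfl, hcV, hcadj, rfl⟩ := hr
  refine ⟨k, c ∘ Fin.rev, by simp, by simp, fun i => hcV _, fun i => ?_, ?_⟩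
  · simpa [Fin.rev_castSucc, Fin.rev_succ] using hsymm _ _ (hcadj i.rev)
  · simp only [Function.comp_apply, Fin.rev_castSucc, Fin.rev_succ]
    rw [← Equiv.sum_comp Fin.revPerm]
    simp [norm_sub_rev]

theorem chainLengths_nonempty (hx : x ∈ V)
    (hxy : Relation.ReflTransGen (fun a b => a ∈ V ∧ b ∈ V ∧ Adj a b) x y) :
    (chainLengths V Adj x y).Nonempty := by
  induction hxy with
  | refl => exact ⟨0, zero_mem_chainLengths hx⟩
  | tail _ hbc ih =>
    obtain ⟨r, hr⟩ := ih
    exact ⟨_, add_norm_mem_chainLengths hr hbc.2.1 hbc.2.2⟩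

theorem norm_sub_le_mul_of_mem_chainLengths {F : Type*} [SeminormedAddCommGroup F]
    {φ : EuclideanSpace ℝ (Fin n) → F} {C : ℝ}
    (hφ : ∀ a ∈ V, ∀ b ∈ V, Adj a b → ‖φ b - φ a‖ ≤ C * ‖b - a‖) {r : ℝ}
    (hr : r ∈ chainLengths V Adj x y) : ‖φ y - φ x‖ ≤ C * r := by
  obtain ⟨k, c, rfl, rfl, hcV, hcadj, rfl⟩ := hr
  calc ‖φ (c (Fin.last k)) - φ (c 0)‖
      = ‖∑ i : Fin k, (φ (c i.succ) - φ (c i.castSucc))‖ :=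
        congrArg norm (Fin.sum_succ_sub_castSucc (φ ∘ c)).symm
    _ ≤ ∑ i : Fin k, ‖φ (c i.succ) - φ (c i.castSucc)‖ := norm_sum_le _ _
    _ ≤ ∑ i : Fin k, C * ‖c i.succ - c i.castSucc‖ :=
        sum_le_sum fun i _ => hφ _ (hcV _) _ (hcV _) (hcadj i)
    _ = C * ∑ i : Fin k, ‖c i.succ - c i.castSucc‖ := (mul_sum _ _ _).symm

theorem chainLengths_nonneg {r : ℝ} (hr : r ∈ chainLengths V Adj x y) : 0 ≤ r := by
  obtain ⟨k, c, -, -, -, -, rfl⟩ := hr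
  positivity

theorem chainLengths_bddBelow : BddBelow (chainLengths V Adj x y) :=
  ⟨0, fun _ => chainLengths_nonneg⟩

theorem geodDist_nonneg : 0 ≤ geodDist V Adj x y :=
  Real.sInf_nonneg fun _ => chainLengths_nonneg

theorem geodDist_self (hx : x ∈ V) : geodDist V Adj x x = 0 :=
  le_antisymm (csInf_le chainLengths_bddBelow (zero_mem_chainLengths hx)) geodDist_nonneg

theorem geodDist_comm (hsymm : ∀ a b, Adj a b → Adj b a) :
    geodDist V Adj x y = geodDist V Adj y x :=
  congrArg sInf <| Set.ext fun _ => ⟨mem_chainLengths_comm hsymm, mem_chainLengths_comm hsymm⟩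

theorem geodDist_le_add_norm {b : EuclideanSpace ℝ (Fin n)}
    (hxy : (chainLengths V Adj x y).Nonempty)
    (hb : b ∈ V) (hyb : Adj y b) : geodDist V Adj x b ≤ geodDist V Adj x y + ‖b - y‖ := by
  have h : geodDist V Adj x b - ‖b - y‖ ≤ geodDist V Adj x y :=
    le_csInf hxy fun _ hr => sub_le_iff_le_add.2 <|
      csInf_le chainLengths_bddBelow (add_norm_mem_chainLengths hr hb hyb)
  linarith

theorem geodDist_le_norm_of_adj (hx : x ∈ V) (hy : y ∈ V) (hxy : Adj x y) :
    geodDist V Adj x y ≤ ‖y - x‖ := by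
  simpa [geodDist_self hx] using geodDist_le_add_norm ⟨0, zero_mem_chainLengths hx⟩ hy hxy

theorem norm_sub_le_mul_geodDist {F : Type*} [SeminormedAddCommGroup F]
    {φ : EuclideanSpace ℝ (Fin n) → F} {C : ℝ} (hC : 0 ≤ C)
    (hφ : ∀ a ∈ V, ∀ b ∈ V, Adj a b → ‖φ b - φ a‖ ≤ C * ‖b - a‖)
    (hxy : (chainLengths V Adj x y).Nonempty) : ‖φ y - φ x‖ ≤ C * geodDist V Adj x y := by
  rw [geodDist_eq_sInf, ← smul_eq_mul, ← Real.sInf_smul_of_nonneg hC]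
  exact le_csInf hxy.smul_set fun _ ⟨r, hr, hCr⟩ =>
    hCr ▸ norm_sub_le_mul_of_mem_chainLengths hφ hr

theorem norm_sub_le_geodDist (hxy : (chainLengths V Adj x y).Nonempty) :
    ‖y - x‖ ≤ geodDist V Adj x y := by
  simpa using norm_sub_le_mul_geodDist (φ := id) zero_le_one (fun _ _ _ _ _ => by simp) hxy

noncomputable def geodLipConst (V : Finset (EuclideanSpace ℝ (Fin n)))
    (Adj : EuclideanSpace ℝ (Fin n) → EuclideanSpace ℝ (Fin n) → Prop)
    (s : Finset (EuclideanSpace ℝ (Fin n))) (g : EuclideanSpace ℝ (Fin n) → ℝ) : ℝ :=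
  sSup {r : ℝ | ∃ x ∈ s, ∃ y ∈ s, x ≠ y ∧ r = |g x - g y| / geodDist V Adj x y}

section LipConst

variable {s : Finset (EuclideanSpace ℝ (Fin n))} {g : EuclideanSpace ℝ (Fin n) → ℝ}

theorem geodLipConst_nonneg : 0 ≤ geodLipConst V Adj s g := by
  refine Real.sSup_nonneg ?_
  rintro _ ⟨_, -, _, -, -, rfl⟩
  exact div_nonneg (abs_nonneg _) geodDist_nonneg

theorem le_geodLipConst (hx : x ∈ s) (hy : y ∈ s) (hxy : x ≠ y) :
    |g x - g y| / geodDist V Adj x y ≤ geodLipConst V Adj s g := by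
  refine le_csSup (Set.Finite.subset (s.finite_toSet.image2
    (fun x y => |g x - g y| / geodDist V Adj x y) s.finite_toSet) ?_).bddAbove
    ⟨x, hx, y, hy, hxy, rfl⟩
  rintro _ ⟨x, hx, y, hy, -, rfl⟩
  exact ⟨x, hx, y, hy, rfl⟩

theorem geodLipConst_le {L : ℝ} (hL : 0 ≤ L)
    (h : ∀ x ∈ s, ∀ y ∈ s, x ≠ y → |g x - g y| ≤ L * geodDist V Adj x y) :
    geodLipConst V Adj s g ≤ L := by
  refine Real.sSup_le ?_ hL
  rintro _ ⟨x, hx, y, hy, hxy, rfl⟩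
  exact div_le_of_le_mul₀ geodDist_nonneg hL (h x hx y hy hxy)

theorem geodLipConst_congr {g' : EuclideanSpace ℝ (Fin n) → ℝ} (h : ∀ z ∈ s, g z = g' z) :
    geodLipConst V Adj s g = geodLipConst V Adj s g' := by
  refine congrArg sSup (Set.ext fun r => ?_)
  constructor <;> rintro ⟨x, hx, y, hy, hxy, rfl⟩ <;>
    exact ⟨x, hx, y, hy, hxy, by rw [h x hx, h y hy]⟩

end LipConst

theorem exists_mem_of_steep_ascent (hsymm : ∀ a b, Adj a b → Adj b a)
    (hne : ∀ a b, Adj a b → a ≠ b)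
    (hconn : ∀ x ∈ V, ∀ y ∈ V,
      Relation.ReflTransGen (fun a b => a ∈ V ∧ b ∈ V ∧ Adj a b) x y)
    {Ω : Finset (EuclideanSpace ℝ (Fin n))} {v : EuclideanSpace ℝ (Fin n) → ℝ}
    (hK : MinimizesLocalSlope V Adj Ω v) {S : ℝ} (hS : 0 < S)
    (hedge : ∀ a ∈ V, ∀ b ∈ V, Adj a b → |v b - v a| ≤ S * ‖b - a‖)
    {w x : EuclideanSpace ℝ (Fin n)} (hw : w ∈ V) (hx : x ∈ V)
    (hd : S * geodDist V Adj w x ≤ v x - v w)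
    (hin : ∃ a ∈ V, Adj x a ∧ v x - v a = S * ‖a - x‖) :
    ∃ p ∈ Ω, v x ≤ v p ∧ S * geodDist V Adj w p ≤ v p - v w := by
  classical
  by_cases hxΩ : x ∈ Ω
  · exact ⟨x, hxΩ, le_rfl, hd⟩
  obtain ⟨b, hb, hxb, hvb⟩ :=
    exists_steep_ascent (hne x) (hK x hx hxΩ) (fun a ha => hedge x hx a ha) hin
  have hvxb : v x < v b := by
    have := mul_pos hS (norm_sub_pos_iff.2 (hne x b hxb).symm)
    linarith
  have hdb : S * geodDist V Adj w b ≤ v b - v w := by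
    have := mul_le_mul_of_nonneg_left
      (geodDist_le_add_norm (chainLengths_nonempty hw (hconn w hw x hx)) hb hxb) hS.le
    rw [mul_add] at this
    linarith
  obtain ⟨p, hp, hbp, hdp⟩ := exists_mem_of_steep_ascent hsymm hne hconn hK hS hedge hw hb hdb
    ⟨x, hx, hsymm x b hxb, by rw [norm_sub_rev]; linarith⟩
  exact ⟨p, hp, hvxb.le.trans hbp, hdp⟩
termination_by #(V.filter (v x < v ·))
decreasing_by
  refine card_lt_card <| (ssubset_iff_of_subset fun y hy => ?_).2
    ⟨b, mem_filter.2 ⟨hb, hvxb⟩, by simp⟩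
  exact mem_filter.2 ⟨(mem_filter.1 hy).1, hvxb.trans (mem_filter.1 hy).2⟩

theorem exists_boundary_pair_of_steepest_edge (hsymm : ∀ a b, Adj a b → Adj b a)
    (hne : ∀ a b, Adj a b → a ≠ b)
    (hconn : ∀ x ∈ V, ∀ y ∈ V,
      Relation.ReflTransGen (fun a b => a ∈ V ∧ b ∈ V ∧ Adj a b) x y)
    {Ω : Finset (EuclideanSpace ℝ (Fin n))} (hΩV : Ω ⊆ V) {v : EuclideanSpace ℝ (Fin n) → ℝ}
    (hK : MinimizesLocalSlope V Adj Ω v) {S : ℝ} (hS : 0 < S)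
    (hedge : ∀ a ∈ V, ∀ b ∈ V, Adj a b → |v b - v a| ≤ S * ‖b - a‖)
    {x₀ x₁ : EuclideanSpace ℝ (Fin n)} (hx₀ : x₀ ∈ V) (hx₁ : x₁ ∈ V) (h01 : Adj x₀ x₁)
    (hsteep : v x₁ - v x₀ = S * ‖x₁ - x₀‖) :
    ∃ q ∈ Ω, ∃ p ∈ Ω, v q < v p ∧ S * geodDist V Adj q p ≤ v p - v q := by
  have h10 : Adj x₁ x₀ := hsymm _ _ h01
  have hv01 : v x₀ < v x₁ := by
    have := mul_pos hS (norm_sub_pos_iff.2 (hne _ _ h01).symm)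
    linarith
  have hedge_neg : ∀ a ∈ V, ∀ b ∈ V, Adj a b → |(-v) b - (-v) a| ≤ S * ‖b - a‖ :=
    fun a ha b hb hab => by
      rw [Pi.neg_apply, Pi.neg_apply, neg_sub_neg, abs_sub_comm]
      exact hedge a ha b hb hab
  have hd₀ : S * geodDist V Adj x₁ x₀ ≤ (-v) x₀ - (-v) x₁ := by
    rw [Pi.neg_apply, Pi.neg_apply, neg_sub_neg, hsteep, norm_sub_rev]
    exact mul_le_mul_of_nonneg_left (geodDist_le_norm_of_adj hx₁ hx₀ h10) hS.le
  obtain ⟨q, hq, hq₀, hdq⟩ := exists_mem_of_steep_ascent hsymm hne hconn hK.neg hS hedge_neg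
    hx₁ hx₀ hd₀ ⟨x₁, hx₁, h01, by rw [Pi.neg_apply, Pi.neg_apply, neg_sub_neg, hsteep]⟩
  simp only [Pi.neg_apply, neg_sub_neg, neg_le_neg_iff] at hq₀ hdq
  obtain ⟨p, hp, hp₁, hdp⟩ := exists_mem_of_steep_ascent hsymm hne hconn hK hS hedge (hΩV hq)
    hx₁ (by rwa [geodDist_comm hsymm]) ⟨x₀, hx₀, h10, by rw [norm_sub_rev]; linarith⟩
  exact ⟨q, hq, p, hp, by linarith, hdp⟩

theorem abs_sub_le_geodLipConst_mul (hsymm : ∀ a b, Adj a b → Adj b a)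
    (hne : ∀ a b, Adj a b → a ≠ b)
    (hconn : ∀ x ∈ V, ∀ y ∈ V,
      Relation.ReflTransGen (fun a b => a ∈ V ∧ b ∈ V ∧ Adj a b) x y)
    {Ω : Finset (EuclideanSpace ℝ (Fin n))} (hΩV : Ω ⊆ V) {v : EuclideanSpace ℝ (Fin n) → ℝ}
    (hK : MinimizesLocalSlope V Adj Ω v) (hx : x ∈ V) (hy : y ∈ V) (hxy : Adj x y) :
    |v y - v x| ≤ geodLipConst V Adj Ω v * ‖y - x‖ := by
  obtain ⟨S, x₀, hx₀, x₁, hx₁, h01, hsteep, hS⟩ :=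
    exists_steepest_edge hsymm hne v ⟨x, hx, y, hy, hxy⟩
  refine (hS x hx y hy hxy).trans (mul_le_mul_of_nonneg_right ?_ (norm_nonneg _))
  rcases le_or_gt S 0 with hS0 | hS0
  · exact hS0.trans geodLipConst_nonneg
  obtain ⟨q, hq, p, hp, hqp, hd⟩ :=
    exists_boundary_pair_of_steepest_edge hsymm hne hconn hΩV hK hS0 hS hx₀ hx₁ h01 hsteep
  have hdpos : 0 < geodDist V Adj q p :=
    (norm_sub_pos_iff.2 (ne_of_apply_ne v hqp.ne')).trans_le
      (norm_sub_le_geodDist (chainLengths_nonempty (hΩV hq) (hconn q (hΩV hq) p (hΩV hp))))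
  calc S ≤ |v q - v p| / geodDist V Adj q p := by
        rw [le_div_iff₀ hdpos, abs_sub_comm, abs_of_pos (sub_pos.2 hqp)]
        exact hd
    _ ≤ geodLipConst V Adj Ω v := le_geodLipConst hq hp (ne_of_apply_ne v hqp.ne)

end Graph

theorem kirszbraun_extension_geodesic_lipschitz_general (n : ℕ)
    (V : Finset (EuclideanSpace ℝ (Fin n)))
    (Adj : EuclideanSpace ℝ (Fin n) → EuclideanSpace ℝ (Fin n) → Prop)
    (hsymm : ∀ x y, Adj x y → Adj y x)
    (hne : ∀ x y, Adj x y → x ≠ y)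
    (hconn : ∀ x ∈ V, ∀ y ∈ V,
      Relation.ReflTransGen (fun a b => a ∈ V ∧ b ∈ V ∧ Adj a b) x y)
    (Ω : Finset (EuclideanSpace ℝ (Fin n))) (hΩV : Ω ⊆ V)
    (f u : EuclideanSpace ℝ (Fin n) → ℝ)
    -- u is a Kirszbraun extension of f on G
    (huf : ∀ z ∈ Ω, u z = f z)
    (huK : ∀ x ∈ V, x ∉ Ω → ∀ z : ℝ,
      sSup {r : ℝ | ∃ a ∈ V, Adj x a ∧ r = |u a - u x| / ‖a - x‖}
        ≤ sSup {r : ℝ | ∃ a ∈ V, Adj x a ∧ r = |u a - z| / ‖a - x‖}) :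
    sSup {r : ℝ | ∃ x ∈ V, ∃ y ∈ V, x ≠ y ∧ r = |u x - u y| / geodDist V Adj x y}
      ≤ sSup {r : ℝ | ∃ x ∈ Ω, ∃ y ∈ Ω, x ≠ y ∧ r = |f x - f y| / geodDist V Adj x y} := by
  change geodLipConst V Adj V u ≤ geodLipConst V Adj Ω f
  rw [← geodLipConst_congr huf]
  refine geodLipConst_le geodLipConst_nonneg fun x hx y hy _ => ?_
  rw [abs_sub_comm]
  exact norm_sub_le_mul_geodDist (φ := u) geodLipConst_nonneg
    (fun a ha b hb hab => abs_sub_le_geodLipConst_mul hsymm hne hconn hΩV huK ha hb hab)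
    (chainLengths_nonempty hx (hconn x hx y hy))

/-- if `u` is a Kirszbraun extension of `f : Ω → ℝ` on the finite connected
graph `G = (V, E, Ω)`, then the best Lipschitz constant of `u` on `V` with respect to the
geodesic metric `d_g` is at most that of `f` on `Ω`. -/
theorem kirszbraun_extension_geodesic_lipschitz (n : ℕ)
    (V : Finset (EuclideanSpace ℝ (Fin n)))
    (Adj : EuclideanSpace ℝ (Fin n) → EuclideanSpace ℝ (Fin n) → Prop)
    (hsymm : ∀ x y, Adj x y → Adj y x)
    (hne : ∀ x y, Adj x y → x ≠ y)
    (hconn : ∀ x ∈ V, ∀ y ∈ V,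
      Relation.ReflTransGen (fun a b => a ∈ V ∧ b ∈ V ∧ Adj a b) x y)
    (Ω : Finset (EuclideanSpace ℝ (Fin n))) (hΩ : Ω.Nonempty) (hΩV : Ω ⊆ V)
    (hnbr : ∀ x ∈ V, x ∉ Ω → ∃ y ∈ V, Adj x y)
    (f u : EuclideanSpace ℝ (Fin n) → ℝ)
    -- u is a Kirszbraun extension of f on G
    (huf : ∀ z ∈ Ω, u z = f z)
    (huK : ∀ x ∈ V, x ∉ Ω → ∀ z : ℝ,
      sSup {r : ℝ | ∃ a ∈ V, Adj x a ∧ r = |u a - u x| / ‖a - x‖}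
        ≤ sSup {r : ℝ | ∃ a ∈ V, Adj x a ∧ r = |u a - z| / ‖a - x‖}) :
    sSup {r : ℝ | ∃ x ∈ V, ∃ y ∈ V, x ≠ y ∧ r = |u x - u y| / geodDist V Adj x y}
      ≤ sSup {r : ℝ | ∃ x ∈ Ω, ∃ y ∈ Ω, x ≠ y ∧ r = |f x - f y| / geodDist V Adj x y} :=
  kirszbraun_extension_geodesic_lipschitz_general n V Adj hsymm hne hconn Ω hΩV f u huf huK
end

section
/- Let G = (V,E,Ω) be a finite connected graph with V ⊂ ℝⁿ (adjacent vertices distinct as points, each vertex of V \ Ω having nonempty neighborhood), Ω ⊆ V nonempty, f : Ω → ℝ, and let u be a Kirszbraun extension of f on G. Then for every x ∈ V, min_{z∈Ω} f(z) ≤ u(x) ≤ max_{z∈Ω} f(z). -/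
/-!
Let `M` be the maximum of `u` over `V` and suppose `M > max f`. Following a path from a
maximiser to `Ω`, one finds a maximiser `x`, necessarily outside `Ω`, with a strictly lower
neighbour. Lowering the value at `x` slightly then lowers its local Lipschitz constant, which
contradicts the minimality of `u x`. The lower bound is the upper bound for `-u` and `-f`.
-/

open Filter Topology Set

theorem Relation.ReflTransGen.exists_boundary {α : Type*} {r : α → α → Prop} {a b : α}
    {p : α → Prop} (h : Relation.ReflTransGen r a b) (ha : p a) (hb : ¬ p b) :
    ∃ c d, r c d ∧ p c ∧ ¬ p d := by
  induction h with
  | refl => exact absurd ha hb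
  | @tail c _ _ hcd ih =>
    by_cases hc : p c
    · exact ⟨c, _, hcd, hc, hb⟩
    · exact ih hc

/-- At a vertex `x`, `maxSlope {a | a ∈ V ∧ Adj x a} u (‖· - x‖) z` is the local Lipschitz
constant of the value `z`, which a Kirszbraun extension minimises at `z = u x`. -/
noncomputable def maxSlope {ι : Type*} (s : Set ι) (v d : ι → ℝ) (z : ℝ) : ℝ :=
  sSup ((fun a => |v a - z| / d a) '' s)

section maxSlope

variable {ι : Type*} {s : Set ι} {v d : ι → ℝ}

theorem maxSlope_neg (z : ℝ) : maxSlope s (-v) d (-z) = maxSlope s v d z := by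
  simp only [maxSlope, Pi.neg_apply, neg_sub_neg, abs_sub_comm]

/-- Pushing `z` slightly below `t` lowers the slopes towards the neighbours with value `t`
only a little and strictly lowers those towards the neighbours below `t`. -/
theorem exists_maxSlope_lt (hs : s.Finite) (hd : ∀ a ∈ s, 0 < d a) {t : ℝ}
    (hle : ∀ a ∈ s, v a ≤ t) {b : ι} (hb : b ∈ s) (hbt : v b < t) :
    ∃ z, maxSlope s v d z < maxSlope s v d t := by
  set L := maxSlope s v d t
  have hslope_le : ∀ a ∈ s, |v a - t| / d a ≤ L := fun a ha =>
    le_csSup (hs.image _).bddAbove (mem_image_of_mem _ ha)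
  have hL : 0 < L := by
    have hb_pos : 0 < |v b - t| / d b :=
      div_pos (abs_pos.mpr (sub_ne_zero.mpr hbt.ne)) (hd b hb)
    exact hb_pos.trans_le (hslope_le b hb)
  have hev : ∀ a ∈ s, ∀ᶠ z in 𝓝[<] t, |v a - z| / d a < L := by
    intro a ha
    rcases (hle a ha).lt_or_eq with hat | hat
    · filter_upwards [Ioo_mem_nhdsLT hat] with z hz
      calc |v a - z| / d a = (z - v a) / d a := by
            rw [abs_sub_comm, abs_of_pos (sub_pos.mpr hz.1)]
        _ < (t - v a) / d a := div_lt_div_of_pos_right (by linarith [hz.2]) (hd a ha)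
        _ = |v a - t| / d a := by rw [abs_sub_comm, abs_of_pos (sub_pos.mpr hat)]
        _ ≤ L := hslope_le a ha
    · have hcont : Continuous fun z => |v a - z| / d a := by fun_prop
      have h0 : |v a - t| / d a < L := by simpa [hat] using hL
      exact nhdsWithin_le_nhds (hcont.continuousAt.eventually_lt continuousAt_const h0)
  obtain ⟨z, hz⟩ := (hs.eventually_all.mpr hev).exists
  exact ⟨z, (Set.Finite.csSup_lt_iff (hs.image _) ⟨_, mem_image_of_mem _ hb⟩).mpr
    (forall_mem_image.mpr hz)⟩

end maxSlope

section Graph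

variable {E : Type*} [NormedAddCommGroup E] {V Ω : Finset E} {Adj : E → E → Prop}

theorem sSup_slopes_eq_maxSlope (u : E → ℝ) (x : E) (z : ℝ) :
    sSup {r : ℝ | ∃ a ∈ V, Adj x a ∧ r = |u a - z| / ‖a - x‖}
      = maxSlope {a | a ∈ V ∧ Adj x a} u (‖· - x‖) z := by
  simp only [maxSlope, image, mem_ofPred_eq, and_assoc, eq_comm]

theorem le_sup'_of_maxSlope_le (hne : ∀ x y, Adj x y → x ≠ y)
    (hconn : ∀ x ∈ V, ∀ y ∈ V,
      Relation.ReflTransGen (fun a b => a ∈ V ∧ b ∈ V ∧ Adj a b) x y)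
    (hΩ : Ω.Nonempty) (hΩV : Ω ⊆ V) {f u : E → ℝ} (huf : ∀ z ∈ Ω, u z = f z)
    (huK : ∀ x ∈ V, x ∉ Ω → ∀ z : ℝ,
      maxSlope {a | a ∈ V ∧ Adj x a} u (‖· - x‖) (u x)
        ≤ maxSlope {a | a ∈ V ∧ Adj x a} u (‖· - x‖) z) :
    ∀ x ∈ V, u x ≤ Ω.sup' hΩ f := by
  have hV : V.Nonempty := hΩ.mono hΩV
  set M := V.sup' hV u
  suffices M ≤ Ω.sup' hΩ f from fun x hx => (V.le_sup' u hx).trans this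
  by_contra! hM
  obtain ⟨x₀, hx₀, hux₀⟩ := V.exists_mem_eq_sup' hV u
  obtain ⟨ω, hω⟩ := hΩ
  have hωM : u ω ≠ M := by
    rw [huf ω hω]
    exact ((Ω.le_sup' f hω).trans_lt hM).ne
  obtain ⟨x, y, ⟨hx, hy, hxy⟩, hux, huy⟩ :=
    (hconn x₀ hx₀ ω (hΩV hω)).exists_boundary (p := fun a => u a = M) hux₀.symm hωM
  have hxΩ : x ∉ Ω := fun hxΩ =>
    (Ω.le_sup' f hxΩ).not_gt (by rwa [← huf x hxΩ, hux])
  obtain ⟨z, hz⟩ := exists_maxSlope_lt (s := {a | a ∈ V ∧ Adj x a}) (v := u)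
    (V.finite_toSet.subset fun a ha => ha.1)
    (fun a ha => norm_pos_iff.mpr (sub_ne_zero.mpr (hne x a ha.2).symm))
    (fun a ha => (V.le_sup' u ha.1).trans_eq hux.symm) ⟨hy, hxy⟩
    (((V.le_sup' u hy).lt_of_ne huy).trans_eq hux.symm)
  exact (huK x hx hxΩ z).not_gt hz

end Graph

theorem kirszbraun_extension_max_principle_general (n : ℕ)
    (V : Finset (EuclideanSpace ℝ (Fin n)))
    (Adj : EuclideanSpace ℝ (Fin n) → EuclideanSpace ℝ (Fin n) → Prop)
    (hne : ∀ x y, Adj x y → x ≠ y)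
    (hconn : ∀ x ∈ V, ∀ y ∈ V,
      Relation.ReflTransGen (fun a b => a ∈ V ∧ b ∈ V ∧ Adj a b) x y)
    (Ω : Finset (EuclideanSpace ℝ (Fin n))) (hΩ : Ω.Nonempty) (hΩV : Ω ⊆ V)
    (f u : EuclideanSpace ℝ (Fin n) → ℝ)
    -- u is a Kirszbraun extension of f on G
    (huf : ∀ z ∈ Ω, u z = f z)
    (huK : ∀ x ∈ V, x ∉ Ω → ∀ z : ℝ,
      sSup {r : ℝ | ∃ a ∈ V, Adj x a ∧ r = |u a - u x| / ‖a - x‖}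
        ≤ sSup {r : ℝ | ∃ a ∈ V, Adj x a ∧ r = |u a - z| / ‖a - x‖}) :
    ∀ x ∈ V, Ω.inf' hΩ f ≤ u x ∧ u x ≤ Ω.sup' hΩ f := by
  simp only [sSup_slopes_eq_maxSlope] at huK
  have huK_neg : ∀ x ∈ V, x ∉ Ω → ∀ z : ℝ,
      maxSlope {a | a ∈ V ∧ Adj x a} (-u) (‖· - x‖) ((-u) x)
        ≤ maxSlope {a | a ∈ V ∧ Adj x a} (-u) (‖· - x‖) z := fun x hx hxΩ z => by
    rw [Pi.neg_apply, maxSlope_neg, ← neg_neg z, maxSlope_neg]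
    exact huK x hx hxΩ (-z)
  intro x hx
  refine ⟨?_, le_sup'_of_maxSlope_le hne hconn hΩ hΩV huf huK x hx⟩
  have hneg := le_sup'_of_maxSlope_le hne hconn hΩ hΩV (f := -f)
    (fun z hz => by simp [huf z hz]) huK_neg x hx
  obtain ⟨z, hz, hfz⟩ := Ω.exists_mem_eq_sup' hΩ (-f)
  rw [hfz, Pi.neg_apply, Pi.neg_apply, neg_le_neg_iff] at hneg
  exact (Ω.inf'_le f hz).trans hneg

/-- maximum principle: if `u` is a Kirszbraun extension of `f : Ω → ℝ` on
the finite connected graph `G = (V, E, Ω)`, then for every `x ∈ V`,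
`min_{z ∈ Ω} f z ≤ u x ≤ max_{z ∈ Ω} f z`. -/
theorem kirszbraun_extension_max_principle (n : ℕ)
    (V : Finset (EuclideanSpace ℝ (Fin n)))
    (Adj : EuclideanSpace ℝ (Fin n) → EuclideanSpace ℝ (Fin n) → Prop)
    (hsymm : ∀ x y, Adj x y → Adj y x)
    (hne : ∀ x y, Adj x y → x ≠ y)
    (hconn : ∀ x ∈ V, ∀ y ∈ V,
      Relation.ReflTransGen (fun a b => a ∈ V ∧ b ∈ V ∧ Adj a b) x y)
    (Ω : Finset (EuclideanSpace ℝ (Fin n))) (hΩ : Ω.Nonempty) (hΩV : Ω ⊆ V)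
    (hnbr : ∀ x ∈ V, x ∉ Ω → ∃ y ∈ V, Adj x y)
    (f u : EuclideanSpace ℝ (Fin n) → ℝ)
    -- u is a Kirszbraun extension of f on G
    (huf : ∀ z ∈ Ω, u z = f z)
    (huK : ∀ x ∈ V, x ∉ Ω → ∀ z : ℝ,
      sSup {r : ℝ | ∃ a ∈ V, Adj x a ∧ r = |u a - u x| / ‖a - x‖}
        ≤ sSup {r : ℝ | ∃ a ∈ V, Adj x a ∧ r = |u a - z| / ‖a - x‖}) :
    ∀ x ∈ V, Ω.inf' hΩ f ≤ u x ∧ u x ≤ Ω.sup' hΩ f :=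
  kirszbraun_extension_max_principle_general n V Adj hne hconn Ω hΩ hΩV f u huf huK
end

section
/- Let S = {p₁,…,p_N} ⊂ ℝⁿ be finite, f : S → ℝᵐ, and x ∈ ℝⁿ \ S. Suppose there exist a nonempty subset J ⊆ {1,…,N}, a point f₀ in the convex hull of {f(p_j)}_{j∈J}, and λ₀ > 0 such that ‖f₀ − f(p_j)‖ = λ₀‖x − p_j‖ for all j ∈ J and ‖f₀ − f(p_i)‖ ≤ λ₀‖x − p_i‖ for all i ∈ {1,…,N}. Then λ₀ = λ(f,S)(x) and f₀ = K(f,S)(x). -/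
/-!
Were some `y` strictly closer than `f₀` to every `f (p j)` with `j ∈ J`, all these points would lie
in the open half-space `{w | ⟪y - f₀, w - f₀⟫ > 0}`, which is convex and misses `f₀`, contradicting
`f₀ ∈ conv {f (p j) | j ∈ J}`. So every `y` has ratio at least `λ₀` at some `j ∈ J`, while `f₀`
has ratio exactly `λ₀` on `J` and at most `λ₀` everywhere.
-/

open RealInnerProductSpace

section
variable {E : Type*} [NormedAddCommGroup E] [InnerProductSpace ℝ E]

theorem exists_norm_sub_le_of_mem_convexHull {s : Set E} {c : E} (hc : c ∈ convexHull ℝ s)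
    (y : E) : ∃ z ∈ s, ‖z - c‖ ≤ ‖z - y‖ := by
  by_contra! h
  have hs : s ⊆ {w | ⟪y - c, c⟫ < ⟪y - c, w⟫} := by
    intro z hz
    have hsq : ‖z - y‖ ^ 2 < ‖z - c‖ ^ 2 := pow_lt_pow_left₀ (h z hz) (norm_nonneg _) two_ne_zero
    rw [show z - y = (z - c) - (y - c) by abel, norm_sub_sq_real, real_inner_comm] at hsq
    have hpos : 0 < ⟪y - c, z - c⟫ := by nlinarith [sq_nonneg ‖y - c‖]
    rw [inner_sub_right] at hpos
    exact sub_pos.mp hpos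
  have hmem := convexHull_min hs (convex_halfSpace_gt (innerₛₗ ℝ (y - c)).isLinear _) hc
  exact hmem.out.false

variable {ι : Type*} [Finite ι] {a : ι → E} {d : ι → ℝ} {J : Set ι} {c : E} {lam : ℝ}

theorem le_iSup_norm_sub_div_of_mem_convexHull (hd : ∀ j ∈ J, 0 < d j)
    (hc : c ∈ convexHull ℝ (a '' J)) (heq : ∀ j ∈ J, ‖a j - c‖ = lam * d j) (y : E) :
    lam ≤ ⨆ k, ‖a k - y‖ / d k := by
  obtain ⟨_, ⟨j, hj, rfl⟩, hjy⟩ := exists_norm_sub_le_of_mem_convexHull hc y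
  calc lam = ‖a j - c‖ / d j := by rw [heq j hj, mul_div_cancel_right₀ _ (hd j hj).ne']
    _ ≤ ‖a j - y‖ / d j := div_le_div_of_nonneg_right hjy (hd j hj).le
    _ ≤ ⨆ k, ‖a k - y‖ / d k := le_ciSup (Set.finite_range fun k => ‖a k - y‖ / d k).bddAbove j

theorem iSup_norm_sub_div_eq_and_iInf_eq (hd : ∀ k, 0 < d k)
    (hc : c ∈ convexHull ℝ (a '' J)) (heq : ∀ j ∈ J, ‖a j - c‖ = lam * d j)
    (hle : ∀ k, ‖a k - c‖ ≤ lam * d k) :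
    (⨆ k, ‖a k - c‖ / d k) = lam ∧ (⨅ y, ⨆ k, ‖a k - y‖ / d k) = lam := by
  have hlow := le_iSup_norm_sub_div_of_mem_convexHull (fun j _ => hd j) hc heq
  obtain ⟨_, j, -, -⟩ := convexHull_nonempty_iff.mp ⟨c, hc⟩
  have : Nonempty ι := ⟨j⟩
  have hsup : (⨆ k, ‖a k - c‖ / d k) = lam :=
    le_antisymm (ciSup_le fun k => (div_le_iff₀ (hd k)).2 (hle k)) (hlow c)
  exact ⟨hsup, le_antisymm ((ciInf_le ⟨lam, Set.forall_mem_range.2 hlow⟩ c).trans_eq hsup)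
    (le_ciInf hlow)⟩

end

theorem sSup_setOf_exists_eq {α ι : Type*} [SupSet α] (g : ι → α) :
    sSup {r | ∃ k, r = g k} = ⨆ k, g k :=
  congrArg sSup (Set.ext fun _ => exists_congr fun _ => eq_comm)

theorem kirszbraun_value_certificate_general (n m N : ℕ)
    (p : Fin N → EuclideanSpace ℝ (Fin n))
    (f : EuclideanSpace ℝ (Fin n) → EuclideanSpace ℝ (Fin m))
    (x : EuclideanSpace ℝ (Fin n)) (hx : x ∉ Set.range p)
    (J : Finset (Fin N))
    (f₀ : EuclideanSpace ℝ (Fin m))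
    (hf₀ : f₀ ∈ convexHull ℝ ((fun j => f (p j)) '' (J : Set (Fin N))))
    (lam₀ : ℝ)
    (heq : ∀ j ∈ J, ‖f₀ - f (p j)‖ = lam₀ * ‖x - p j‖)
    (hle : ∀ i : Fin N, ‖f₀ - f (p i)‖ ≤ lam₀ * ‖x - p i‖) :
    lam₀ = (⨅ y : EuclideanSpace ℝ (Fin m),
        sSup {r : ℝ | ∃ k : Fin N, r = ‖f (p k) - y‖ / ‖p k - x‖}) ∧
    sSup {r : ℝ | ∃ k : Fin N, r = ‖f (p k) - f₀‖ / ‖p k - x‖}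
      = (⨅ y : EuclideanSpace ℝ (Fin m),
        sSup {r : ℝ | ∃ k : Fin N, r = ‖f (p k) - y‖ / ‖p k - x‖}) := by
  have hd : ∀ k, 0 < ‖p k - x‖ := fun k => norm_pos_iff.2 (sub_ne_zero.2 fun h => hx ⟨k, h⟩)
  obtain ⟨hsup, hinf⟩ := iSup_norm_sub_div_eq_and_iInf_eq hd hf₀
    (fun j hj => by rw [norm_sub_rev, heq j hj, norm_sub_rev])
    (fun k => by rw [norm_sub_rev, norm_sub_rev (p k)]; exact hle k)
  simp only [sSup_setOf_exists_eq]
  exact ⟨hinf.symm, hsup.trans hinf.symm⟩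

/-- let `S = {p₁, …, p_N} ⊆ ℝⁿ`, `f : S → ℝᵐ`, `x ∈ ℝⁿ \ S`. If there are
a nonempty `J ⊆ {1, …, N}`, a point `f₀` in the convex hull of `{f (p j) : j ∈ J}` and
`λ₀ > 0` with `‖f₀ - f (p j)‖ = λ₀ ‖x - p j‖` for all `j ∈ J` and
`‖f₀ - f (p i)‖ ≤ λ₀ ‖x - p i‖` for all `i`, then `λ₀ = λ(f,S)(x)` and `f₀ = K(f,S)(x)`
(`f₀` attains the infimum defining `λ(f,S)(x)`). -/
theorem kirszbraun_value_certificate (n m N : ℕ) (hN : 0 < N)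
    (p : Fin N → EuclideanSpace ℝ (Fin n)) (hp : Function.Injective p)
    (f : EuclideanSpace ℝ (Fin n) → EuclideanSpace ℝ (Fin m))
    (x : EuclideanSpace ℝ (Fin n)) (hx : x ∉ Set.range p)
    (J : Finset (Fin N)) (hJ : J.Nonempty)
    (f₀ : EuclideanSpace ℝ (Fin m))
    (hf₀ : f₀ ∈ convexHull ℝ ((fun j => f (p j)) '' (J : Set (Fin N))))
    (lam₀ : ℝ) (hlam₀ : 0 < lam₀)
    (heq : ∀ j ∈ J, ‖f₀ - f (p j)‖ = lam₀ * ‖x - p j‖)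
    (hle : ∀ i : Fin N, ‖f₀ - f (p i)‖ ≤ lam₀ * ‖x - p i‖) :
    lam₀ = (⨅ y : EuclideanSpace ℝ (Fin m),
        sSup {r : ℝ | ∃ k : Fin N, r = ‖f (p k) - y‖ / ‖p k - x‖}) ∧
    sSup {r : ℝ | ∃ k : Fin N, r = ‖f (p k) - f₀‖ / ‖p k - x‖}
      = (⨅ y : EuclideanSpace ℝ (Fin m),
        sSup {r : ℝ | ∃ k : Fin N, r = ‖f (p k) - y‖ / ‖p k - x‖}) :=
  kirszbraun_value_certificate_general n m N p f x hx J f₀ hf₀ lam₀ heq hle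
end
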